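/- arXiv:1204.1814 — 6 statements merged into one kernel-verified Lean document; each statement's English description precedes it below -/
import Mathlib

section
/- Let m ≥ 1, t₀ ∈ ℝ, and let K, S : [t₀,∞) → M_m(ℝ) be matrix-valued functions such that K(t) is skew-symmetric and S(t) is symmetric for every t ≥ t₀. Then there exists a regular on [t₀,∞) matrix L(t) of class C¹ satisfying L̇(t)·L(t)ᵀ = K(t) + S(t) for all t ≥ t₀ if and only if K and S are continuous on [t₀,∞) and there exist constants μ > 0, η > 0 and a symmetric positive definite matrix S₀ ∈ M_m(ℝ) such that |2∫_{t₀}^t tr(S(ν)) dν + tr(S₀)| ≤ μ² and det(2∫_{t₀}^t S(ν) dν + S₀) ≥ η² for all t ≥ t₀. -/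
/-!
If `L` is a regular solution, then `P = L Lᵀ` satisfies `Ṗ = L̇ Lᵀ + (L̇ Lᵀ)ᵀ = 2 S`, so
`P t = 2 ∫_{t₀}^t S + S₀` with `S₀ = L(t₀) L(t₀)ᵀ` positive definite; since `tr P = ‖L‖²` and
`det P = (det L)²`, boundedness of `L` and of `1 / det L` are exactly the two integral bounds.

Conversely, `P t = 2 ∫_{t₀}^t S + S₀` is symmetric with `det P ≥ η² > 0`, and with
`A = (K + S) P⁻¹` it solves the Lyapunov equation `Ṗ = A P + P Aᵀ`. Let `L` solve the linear
equation `L̇ = A L` with `L(t₀) L(t₀)ᵀ = S₀`. Then `L Lᵀ` solves the same Lyapunov equation, so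
`L Lᵀ = P` by uniqueness, which gives `L̇ Lᵀ = A P = K + S` and the bounds on `L`. Solutions of
linear equations exist globally: Picard–Lindelöf applies on every interval that is short compared
with the bound of the coefficient, and such local solutions concatenate.
-/

open Matrix Set intervalIntegral

open scoped NNReal Topology

attribute [local instance] Matrix.frobeniusNormedAddCommGroup Matrix.frobeniusNormedSpace

section Calculus

variable {F : Type*} [NormedAddCommGroup F] [NormedSpace ℝ F]

theorem contDiffOn_one_of_hasDerivWithinAt {f f' : ℝ → F} {s : Set ℝ} (hs : UniqueDiffOn ℝ s)
    (hf : ∀ t ∈ s, HasDerivWithinAt f (f' t) s t) (hf' : ContinuousOn f' s) :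
    ContDiffOn ℝ 1 f s :=
  (contDiffOn_one_iff_derivWithin hs).2 ⟨fun t ht => (hf t ht).differentiableWithinAt,
    hf'.congr fun t ht => (hf t ht).derivWithin (hs t ht)⟩

theorem hasDerivWithinAt_integral_Ici [CompleteSpace F] {f : ℝ → F} {a t : ℝ}
    (hf : ContinuousOn f (Ici a)) (ht : t ∈ Ici a) :
    HasDerivWithinAt (fun u => ∫ x in a..u, f x) (f t) (Ici a) t := by
  have : Fact (t ∈ Icc a (t + 1)) := ⟨⟨ht, (lt_add_one t).le⟩⟩
  have hf' : ContinuousOn f (Icc a (t + 1)) := hf.mono Icc_subset_Ici_self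
  have h := integral_hasDerivWithinAt_right (s := Icc a (t + 1))
    ((hf.mono Icc_subset_Ici_self).intervalIntegrable_of_Icc ht)
    (hf'.stronglyMeasurableAtFilter_nhdsWithin measurableSet_Icc t) (hf' t this.out)
  rwa [← Ici_inter_Iic, hasDerivWithinAt_inter (Iic_mem_nhds (lt_add_one t))] at h

end Calculus

theorem Matrix.frobenius_norm_sq_eq_trace {m n : Type*} [Fintype m] [Fintype n]
    (A : Matrix m n ℝ) : ‖A‖ ^ 2 = (A * Aᵀ).trace := by
  have hsum : 0 ≤ ∑ i, ∑ j, ‖A i j‖ ^ (2 : ℝ) := by positivity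
  rw [frobenius_norm_def, ← Real.sqrt_eq_rpow, Real.sq_sqrt hsum, Matrix.trace]
  simp [Matrix.mul_apply, sq]

theorem Matrix.det_mul_transpose_self {n R : Type*} [Fintype n] [DecidableEq n] [CommRing R]
    (A : Matrix n n R) : (A * Aᵀ).det = A.det ^ 2 := by
  rw [det_mul, det_transpose, sq]

theorem Matrix.trace_intervalIntegral {n : Type*} [Fintype n] {f : ℝ → Matrix n n ℝ} {a b : ℝ}
    (hf : ContinuousOn f (uIcc a b)) :
    (∫ x in a..b, f x).trace = ∫ x in a..b, (f x).trace :=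
  ((traceLinearMap n ℝ ℝ).toContinuousLinearMap.intervalIntegral_comp_comm
    hf.intervalIntegrable).symm

def Matrix.transposeₗᵢ (m n : Type*) [Fintype m] [Fintype n] :
    Matrix m n ℝ →ₗᵢ[ℝ] Matrix n m ℝ :=
  { transposeLinearEquiv m n ℝ ℝ with norm_map' := frobenius_norm_transpose }

theorem Matrix.transpose_intervalIntegral {m n : Type*} [Fintype m] [Fintype n]
    (f : ℝ → Matrix m n ℝ) (a b : ℝ) : (∫ x in a..b, f x)ᵀ = ∫ x in a..b, (f x)ᵀ :=
  ((transposeₗᵢ m n).intervalIntegral_comp_comm f).symm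

section LinearODE

variable {E : Type*} [NormedAddCommGroup E] [NormedSpace ℝ E] {g : ℝ → E →L[ℝ] E} {a b : ℝ}

theorem eqOn_Icc_of_hasDerivWithinAt_clm (hg : ContinuousOn g (Icc a b)) {u v : ℝ → E}
    (hu : ∀ t ∈ Icc a b, HasDerivWithinAt u (g t (u t)) (Icc a b) t)
    (hv : ∀ t ∈ Icc a b, HasDerivWithinAt v (g t (v t)) (Icc a b) t) (h : u a = v a) :
    EqOn u v (Icc a b) := by
  obtain ⟨C, hC⟩ := isCompact_Icc.exists_bound_of_continuousOn hg
  have hlip : ∀ t ∈ Ico a b, LipschitzOnWith C.toNNReal (g t) univ := fun t ht =>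
    ((g t).lipschitz.weaken <| by
      rw [← NNReal.coe_le_coe, coe_nnnorm]
      exact (hC t (Ico_subset_Icc_self ht)).trans (Real.le_coe_toNNReal C)).lipschitzOnWith
  have hnhds : ∀ t ∈ Ico a b, Icc a b ∈ 𝓝[≥] t := fun t ht =>
    Icc_mem_nhdsGE_of_mem ht
  refine ODE_solution_unique_of_mem_Icc_right hlip
    (HasDerivWithinAt.continuousOn hu) (fun t ht => ?_) (fun _ _ => mem_univ _)
    (HasDerivWithinAt.continuousOn hv) (fun t ht => ?_) (fun _ _ => mem_univ _) h
  · exact (hu t (Ico_subset_Icc_self ht)).mono_of_mem_nhdsWithin (hnhds t ht)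
  · exact (hv t (Ico_subset_Icc_self ht)).mono_of_mem_nhdsWithin (hnhds t ht)

theorem eqOn_Ici_of_hasDerivWithinAt_clm (hg : ContinuousOn g (Ici a)) {u v : ℝ → E}
    (hu : ∀ t ∈ Ici a, HasDerivWithinAt u (g t (u t)) (Ici a) t)
    (hv : ∀ t ∈ Ici a, HasDerivWithinAt v (g t (v t)) (Ici a) t) (h : u a = v a) :
    EqOn u v (Ici a) := fun _ ht =>
  eqOn_Icc_of_hasDerivWithinAt_clm (hg.mono Icc_subset_Ici_self)
    (fun s hs => (hu s hs.1).mono Icc_subset_Ici_self)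
    (fun s hs => (hv s hs.1).mono Icc_subset_Ici_self) h ⟨ht, le_rfl⟩

theorem hasDerivWithinAt_Icc_concat {f : ℝ → E → E} {u v : ℝ → E} {c : ℝ} (hac : a ≤ c)
    (hcb : c ≤ b) (hu : ∀ t ∈ Icc a c, HasDerivWithinAt u (f t (u t)) (Icc a c) t)
    (hv : ∀ t ∈ Icc c b, HasDerivWithinAt v (f t (v t)) (Icc c b) t) (huv : u c = v c) :
    ∀ t ∈ Icc a b, HasDerivWithinAt (fun s => if s ≤ c then u s else v s)
      (f t (if t ≤ c then u t else v t)) (Icc a b) t := by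
  set w : ℝ → E := fun s => if s ≤ c then u s else v s
  have hwu : EqOn w u (Icc a c) := fun s hs => if_pos hs.2
  have hwv : EqOn w v (Icc c b) := fun s hs => by
    rcases hs.1.eq_or_lt with rfl | hlt
    · exact (if_pos le_rfl).trans huv
    · exact if_neg hlt.not_ge
  intro t _
  show HasDerivWithinAt w (f t (w t)) (Icc a b) t
  rw [← Icc_union_Icc_eq_Icc hac hcb]
  refine HasDerivWithinAt.union ?_ ?_
  · by_cases ht : t ∈ Icc a c
    · rw [hwu ht]
      exact (hu t ht).congr hwu (hwu ht)
    · exact HasFDerivWithinAt.of_notMem_closure (by rwa [closure_Icc])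
  · by_cases ht : t ∈ Icc c b
    · rw [hwv ht]
      exact (hv t ht).congr hwv (hwv ht)
    · exact HasFDerivWithinAt.of_notMem_closure (by rwa [closure_Icc])

variable [CompleteSpace E]

theorem exists_hasDerivWithinAt_clm_Icc_of_mul_le (hab : a ≤ b) (hg : ContinuousOn g (Icc a b))
    {C : ℝ≥0} (hC : ∀ t ∈ Icc a b, ‖g t‖₊ ≤ C) (hCab : 2 * C * (b - a) ≤ 1) (x₀ : E) :
    ∃ u : ℝ → E, u a = x₀ ∧ ∀ t ∈ Icc a b, HasDerivWithinAt u (g t (u t)) (Icc a b) t := by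
  -- on the ball of radius `‖x₀‖ + 1` the field is bounded by `C (2 ‖x₀‖ + 1)`, and
  -- `2 C (b - a) ≤ 1` keeps the solution inside that ball
  have hPL : IsPicardLindelof (fun t x => g t x) (⟨a, left_mem_Icc.2 hab⟩ : Icc a b) x₀
      (‖x₀‖₊ + 1) 0 (C * (2 * ‖x₀‖₊ + 1)) C :=
    { lipschitzOnWith := fun t ht => ((g t).lipschitz.weaken (hC t ht)).lipschitzOnWith
      continuousOn := fun x _ => hg.clm_apply continuousOn_const
      norm_le := fun t ht x hx => by
        have hx' : ‖x‖ ≤ 2 * ‖x₀‖ + 1 := by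
          have := norm_le_norm_add_norm_sub' x x₀
          rw [Metric.mem_closedBall, dist_eq_norm] at hx
          push_cast at hx
          linarith
        calc ‖g t x‖ ≤ C * ‖x‖ := (g t).le_of_opNorm_le (hC t ht) x
          _ ≤ C * (2 * ‖x₀‖ + 1) := by gcongr
      mul_max_le := by
        push_cast
        simp only [sub_self, sub_zero, max_eq_left (sub_nonneg.2 hab)]
        nlinarith [norm_nonneg x₀] }
  exact hPL.exists_eq_forall_mem_Icc_hasDerivWithinAt₀

theorem exists_hasDerivWithinAt_clm_Icc (hg : ContinuousOn g (Icc a b)) (x₀ : E) :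
    ∃ u : ℝ → E, u a = x₀ ∧ ∀ t ∈ Icc a b, HasDerivWithinAt u (g t (u t)) (Icc a b) t := by
  rcases lt_or_ge b a with hba | hab
  · exact ⟨fun _ => x₀, rfl, fun t ht => absurd (ht.1.trans ht.2) hba.not_ge⟩
  obtain ⟨C, hC⟩ := isCompact_Icc.exists_bound_of_continuousOn hg
  have hK : ∀ t ∈ Icc a b, ‖g t‖₊ ≤ C.toNNReal := fun t ht => by
    rw [← NNReal.coe_le_coe, coe_nnnorm]
    exact (hC t ht).trans (Real.le_coe_toNNReal C)
  set h : ℝ := 1 / (2 * C.toNNReal + 1)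
  have hh : 0 < h := by positivity
  have hKh : 2 * C.toNNReal * h ≤ 1 := by
    rw [mul_one_div, div_le_one (by positivity)]
    linarith
  have hstep : ∀ c d, a ≤ c → c ≤ d → d ≤ b → d - c ≤ h → ∀ y : E, ∃ v : ℝ → E, v c = y ∧
      ∀ t ∈ Icc c d, HasDerivWithinAt v (g t (v t)) (Icc c d) t := fun c d hac hcd hdb hdc =>
    exists_hasDerivWithinAt_clm_Icc_of_mul_le hcd (hg.mono (Icc_subset_Icc hac hdb))
      (fun t ht => hK t ⟨hac.trans ht.1, ht.2.trans hdb⟩) (hKh.trans' (by gcongr))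
  have hsol : ∀ n : ℕ, ∀ c ∈ Icc a b, c ≤ a + n * h → ∃ u : ℝ → E, u a = x₀ ∧
      ∀ t ∈ Icc a c, HasDerivWithinAt u (g t (u t)) (Icc a c) t := by
    intro n
    induction n with
    | zero =>
      intro c hc hca
      obtain rfl : c = a := le_antisymm (by simpa using hca) hc.1
      exact hstep c c le_rfl le_rfl hc.2 (by simpa using hh.le) x₀
    | succ n ih =>
      intro c hc hcn
      push_cast at hcn
      have hac' : a ≤ max a (c - h) := le_max_left _ _
      have hc'c : max a (c - h) ≤ c := max_le hc.1 (by linarith)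
      obtain ⟨u, hu₀, hu⟩ := ih (max a (c - h)) ⟨hac', hc'c.trans hc.2⟩
        (max_le (by nlinarith [n.cast_nonneg (α := ℝ)]) (by linarith))
      obtain ⟨v, hv₀, hv⟩ := hstep _ c hac' hc'c hc.2 (by linarith [le_max_right a (c - h)]) _
      exact ⟨_, (if_pos hac').trans hu₀, hasDerivWithinAt_Icc_concat hac' hc'c hu hv hv₀.symm⟩
  obtain ⟨n, hn⟩ := exists_nat_ge ((b - a) / h)
  exact hsol n b ⟨hab, le_rfl⟩ (by rw [div_le_iff₀ hh] at hn; linarith)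

theorem exists_hasDerivWithinAt_clm_Ici (hg : ContinuousOn g (Ici a)) (x₀ : E) :
    ∃ u : ℝ → E, u a = x₀ ∧ ∀ t ∈ Ici a, HasDerivWithinAt u (g t (u t)) (Ici a) t := by
  choose sol hsol₀ hsol using fun b : ℝ =>
    exists_hasDerivWithinAt_clm_Icc (hg.mono (Icc_subset_Ici_self : Icc a b ⊆ Ici a)) x₀
  have hagree : ∀ b c t, t ∈ Icc a b → t ∈ Icc a c → sol b t = sol c t := by
    intro b c t htb htc
    have hb : Icc a (min b c) ⊆ Icc a b := Icc_subset_Icc le_rfl (min_le_left _ _)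
    have hc : Icc a (min b c) ⊆ Icc a c := Icc_subset_Icc le_rfl (min_le_right _ _)
    exact eqOn_Icc_of_hasDerivWithinAt_clm (hg.mono Icc_subset_Ici_self)
      (fun s hs => (hsol b s (hb hs)).mono hb) (fun s hs => (hsol c s (hc hs)).mono hc)
      ((hsol₀ b).trans (hsol₀ c).symm) ⟨htb.1, le_min htb.2 htc.2⟩
  refine ⟨fun t => sol (t + 1) t, hsol₀ _, fun t ht => ?_⟩
  have hIic : Iic (t + 1) ∈ 𝓝 t := Iic_mem_nhds (lt_add_one t)
  have hIcc : Icc a (t + 1) ∈ 𝓝[Ici a] t := by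
    rw [← Ici_inter_Iic]
    exact inter_mem_nhdsWithin _ hIic
  have hderiv := (hsol (t + 1) t ⟨ht, (lt_add_one t).le⟩)
  rw [← Ici_inter_Iic, hasDerivWithinAt_inter hIic] at hderiv
  refine hderiv.congr_of_eventuallyEq ?_ rfl
  filter_upwards [hIcc] with s hs
  exact hagree _ _ s ⟨hs.1, (lt_add_one s).le⟩ hs

end LinearODE

section MatrixODE

attribute [local instance] Matrix.frobeniusNormedRing Matrix.frobeniusNormedAlgebra

variable {n : Type*} [Fintype n] [DecidableEq n] {a : ℝ}

theorem HasDerivWithinAt.mul_transpose_self {L : ℝ → Matrix n n ℝ} {L' : Matrix n n ℝ}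
    {s : Set ℝ} {t : ℝ} (hL : HasDerivWithinAt L L' s t) :
    HasDerivWithinAt (fun τ => L τ * (L τ)ᵀ) (L' * (L t)ᵀ + (L' * (L t)ᵀ)ᵀ) s t := by
  have hLT : HasDerivWithinAt (fun τ => (L τ)ᵀ) L'ᵀ s t := by
    have h := hL.star
    simp only [star_eq_conjTranspose, conjTranspose_eq_transpose_of_trivial] at h
    exact h
  rw [transpose_mul, transpose_transpose]
  exact hL.fun_mul hLT

theorem Matrix.exists_hasDerivWithinAt_mul_Ici {A : ℝ → Matrix n n ℝ}
    (hA : ContinuousOn A (Ici a)) (X₀ : Matrix n n ℝ) :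
    ∃ X : ℝ → Matrix n n ℝ, X a = X₀ ∧ ∀ t ∈ Ici a, HasDerivWithinAt X (A t * X t) (Ici a) t :=
  exists_hasDerivWithinAt_clm_Ici (g := fun t => ContinuousLinearMap.mul ℝ _ (A t))
    ((ContinuousLinearMap.mul ℝ (Matrix n n ℝ)).continuous.comp_continuousOn hA) X₀

theorem Matrix.eqOn_Ici_of_hasDerivWithinAt_lyapunov {A X Y : ℝ → Matrix n n ℝ}
    (hA : ContinuousOn A (Ici a))
    (hX : ∀ t ∈ Ici a, HasDerivWithinAt X (A t * X t + X t * (A t)ᵀ) (Ici a) t)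
    (hY : ∀ t ∈ Ici a, HasDerivWithinAt Y (A t * Y t + Y t * (A t)ᵀ) (Ici a) t)
    (h : X a = Y a) : EqOn X Y (Ici a) :=
  eqOn_Ici_of_hasDerivWithinAt_clm (g := fun t => ContinuousLinearMap.mul ℝ (Matrix n n ℝ) (A t) +
      (ContinuousLinearMap.mul ℝ (Matrix n n ℝ)).flip (A t)ᵀ)
    (((ContinuousLinearMap.mul ℝ (Matrix n n ℝ)).continuous.comp_continuousOn hA).add
      ((ContinuousLinearMap.mul ℝ (Matrix n n ℝ)).flip.continuous.comp_continuousOn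
        ((transposeₗᵢ n n).continuous.comp_continuousOn hA))) hX hY h

end MatrixODE

section Gram

variable {n : Type*} [Fintype n]

open scoped MatrixOrder in
theorem Matrix.PosSemidef.exists_mul_transpose_self_eq [DecidableEq n] {A : Matrix n n ℝ}
    (hA : A.PosSemidef) : ∃ B : Matrix n n ℝ, B * Bᵀ = A := by
  refine ⟨CFC.sqrt A, ?_⟩
  rw [← conjTranspose_eq_transpose_of_trivial, (CFC.sqrt_nonneg A).posSemidef.1.eq]
  exact CFC.sqrt_mul_sqrt_self A hA.nonneg

theorem Matrix.exists_hasDerivWithinAt_mul_and_mul_transpose_self_eq [DecidableEq n] {a : ℝ}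
    {A P : ℝ → Matrix n n ℝ} (hA : ContinuousOn A (Ici a))
    (hP : ∀ t ∈ Ici a, HasDerivWithinAt P (A t * P t + P t * (A t)ᵀ) (Ici a) t)
    (hP₀ : (P a).PosSemidef) :
    ∃ L : ℝ → Matrix n n ℝ, (∀ t ∈ Ici a, HasDerivWithinAt L (A t * L t) (Ici a) t) ∧
      ∀ t ∈ Ici a, L t * (L t)ᵀ = P t := by
  obtain ⟨B, hB⟩ := hP₀.exists_mul_transpose_self_eq
  obtain ⟨L, hL₀, hL⟩ := exists_hasDerivWithinAt_mul_Ici hA B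
  refine ⟨L, hL, eqOn_Ici_of_hasDerivWithinAt_lyapunov hA (fun t ht => ?_) hP (by rw [hL₀, hB])⟩
  refine (hL t ht).mul_transpose_self.congr_deriv ?_
  simp only [transpose_mul, transpose_transpose, Matrix.mul_assoc]

omit [Fintype n] in
theorem Matrix.add_add_transpose_eq_two_smul {K S : Matrix n n ℝ} (hK : Kᵀ = -K) (hS : Sᵀ = S) :
    K + S + (K + S)ᵀ = (2 : ℝ) • S := by
  rw [transpose_add, hK, hS, two_smul]
  abel

theorem Matrix.mul_inv_mul_add_mul_transpose [DecidableEq n] {K S P : Matrix n n ℝ}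
    (hK : Kᵀ = -K) (hS : Sᵀ = S) (hP : Pᵀ = P) (hPdet : IsUnit P.det) :
    (K + S) * P⁻¹ * P + P * ((K + S) * P⁻¹)ᵀ = (2 : ℝ) • S := by
  rw [mul_assoc, nonsing_inv_mul _ hPdet, mul_one, ← hP, ← transpose_mul, hP, mul_assoc,
    nonsing_inv_mul _ hPdet, mul_one, add_add_transpose_eq_two_smul hK hS]

theorem ContinuousOn.matrix_inv [DecidableEq n] {X : Type*} [TopologicalSpace X]
    {P : X → Matrix n n ℝ} {s : Set X} (hP : ContinuousOn P s) (hdet : ∀ x ∈ s, IsUnit (P x).det) :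
    ContinuousOn (fun x => (P x)⁻¹) s := fun x hx =>
  (continuousAt_matrix_inv _ ((hdet x hx).unit_spec ▸
    NormedRing.inverse_continuousAt _)).comp_continuousWithinAt (hP x hx)

theorem Matrix.continuousOn_of_skew_add_symm {X : Type*} [TopologicalSpace X]
    {E K S : X → Matrix n n ℝ} {s : Set X} (hE : ContinuousOn E s)
    (hEKS : ∀ x ∈ s, E x = K x + S x) (hK : ∀ x ∈ s, (K x)ᵀ = -K x)
    (hS : ∀ x ∈ s, (S x)ᵀ = S x) : ContinuousOn K s ∧ ContinuousOn S s := by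
  have hEt : ContinuousOn (fun x => (E x)ᵀ) s := (transposeₗᵢ n n).continuous.comp_continuousOn hE
  have hE_transpose : ∀ x ∈ s, (E x)ᵀ = -K x + S x := fun x hx => by
    rw [hEKS x hx, transpose_add, hK x hx, hS x hx]
  refine ⟨((hE.sub hEt).const_smul (2⁻¹ : ℝ)).congr fun x hx => ?_,
    ((hE.add hEt).const_smul (2⁻¹ : ℝ)).congr fun x hx => ?_⟩
  · change K x = (2⁻¹ : ℝ) • (E x - (E x)ᵀ)
    rw [hE_transpose x hx, hEKS x hx]
    module
  · change S x = (2⁻¹ : ℝ) • (E x + (E x)ᵀ)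
    rw [hE_transpose x hx, hEKS x hx]
    module

end Gram

section Regular

variable {n : Type*} [Fintype n] {t₀ : ℝ} {K S : ℝ → Matrix n n ℝ}

theorem trace_two_smul_intervalIntegral_add (hSc : ContinuousOn S (Ici t₀)) (S₀ : Matrix n n ℝ)
    {t : ℝ} (ht : t ∈ Ici t₀) :
    ((2 : ℝ) • (∫ ν in t₀..t, S ν) + S₀).trace = 2 * (∫ ν in t₀..t, (S ν).trace) + S₀.trace := by
  rw [trace_add, trace_smul, smul_eq_mul,
    trace_intervalIntegral (hSc.mono (by rw [uIcc_of_le ht]; exact Icc_subset_Ici_self))]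

theorem integral_bounds_of_regular_solution [DecidableEq n] (hK : ∀ t ∈ Ici t₀, (K t)ᵀ = -K t)
    (hS : ∀ t ∈ Ici t₀, (S t)ᵀ = S t) {L : ℝ → Matrix n n ℝ} (hL : ContDiffOn ℝ 1 L (Ici t₀))
    {M : ℝ} (hM : ∀ t ∈ Ici t₀, ‖L t‖ ≤ M) {η : ℝ} (hη : 0 < η)
    (hLdet : ∀ t ∈ Ici t₀, η ≤ |(L t).det|)
    (hLeq : ∀ t ∈ Ici t₀, derivWithin L (Ici t₀) t * (L t)ᵀ = K t + S t) :
    ContinuousOn K (Ici t₀) ∧ ContinuousOn S (Ici t₀) ∧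
      ∃ μ > (0:ℝ), ∃ η > (0:ℝ), ∃ S₀ : Matrix n n ℝ, S₀.PosDef ∧
        (∀ t ∈ Ici t₀, |2 * (∫ ν in t₀..t, (S ν).trace) + S₀.trace| ≤ μ ^ 2) ∧
        (∀ t ∈ Ici t₀, η ^ 2 ≤ ((2:ℝ) • (∫ ν in t₀..t, S ν) + S₀).det) := by
  have hL' : ContinuousOn (derivWithin L (Ici t₀)) (Ici t₀) :=
    hL.continuousOn_derivWithin (uniqueDiffOn_Ici t₀) le_rfl
  have hLd : ∀ t ∈ Ici t₀, HasDerivWithinAt L (derivWithin L (Ici t₀) t) (Ici t₀) t :=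
    fun t ht => (hL.differentiableOn one_ne_zero t ht).hasDerivWithinAt
  obtain ⟨hKc, hSc⟩ := continuousOn_of_skew_add_symm
    (hL'.mul ((transposeₗᵢ n n).continuous.comp_continuousOn hL.continuousOn)) hLeq hK hS
  have hLLt : ∀ t ∈ Ici t₀,
      HasDerivWithinAt (fun τ => L τ * (L τ)ᵀ) ((2:ℝ) • S t) (Ici t₀) t := fun t ht =>
    (hLd t ht).mul_transpose_self.congr_deriv <| by
      rw [hLeq t ht, add_add_transpose_eq_two_smul (hK t ht) (hS t ht)]
  have hP : ∀ t ∈ Ici t₀, L t * (L t)ᵀ = (2:ℝ) • (∫ ν in t₀..t, S ν) + L t₀ * (L t₀)ᵀ := by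
    intro t ht
    rw [← integral_smul, integral_eq_sub_of_hasDeriv_right_of_le ht
      (HasDerivWithinAt.continuousOn hLLt |>.mono Icc_subset_Ici_self)
      (fun x hx => (hLLt x hx.1.le).mono (Ioi_subset_Ici hx.1.le))
      (((hSc.mono Icc_subset_Ici_self).const_smul (2:ℝ)).intervalIntegrable_of_Icc ht)]
    abel
  refine ⟨hKc, hSc, max M 1, by positivity, η, hη, L t₀ * (L t₀)ᵀ, ?_, fun t ht => ?_,
    fun t ht => ?_⟩
  · have hpsd := posSemidef_self_mul_conjTranspose (L t₀)
    rw [conjTranspose_eq_transpose_of_trivial] at hpsd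
    refine hpsd.posDef_iff_det_ne_zero.2 ?_
    rw [det_mul_transpose_self]
    exact pow_ne_zero 2 (abs_pos.1 (hη.trans_le (hLdet t₀ self_mem_Ici)))
  · rw [← trace_two_smul_intervalIntegral_add hSc _ ht, ← hP t ht, ← frobenius_norm_sq_eq_trace,
      abs_of_nonneg (sq_nonneg _)]
    exact pow_le_pow_left₀ (norm_nonneg _) ((hM t ht).trans (le_max_left _ _)) 2
  · rw [← hP t ht, det_mul_transpose_self, ← sq_abs (L t).det]
    exact pow_le_pow_left₀ hη.le (hLdet t ht) 2

theorem exists_regular_solution_of_integral_bounds [DecidableEq n]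
    (hK : ∀ t ∈ Ici t₀, (K t)ᵀ = -K t) (hS : ∀ t ∈ Ici t₀, (S t)ᵀ = S t)
    (hKc : ContinuousOn K (Ici t₀)) (hSc : ContinuousOn S (Ici t₀)) {μ η : ℝ} (hμ : 0 < μ)
    (hη : 0 < η) {S₀ : Matrix n n ℝ} (hS₀ : S₀.PosDef)
    (htr : ∀ t ∈ Ici t₀, |2 * (∫ ν in t₀..t, (S ν).trace) + S₀.trace| ≤ μ ^ 2)
    (hdet : ∀ t ∈ Ici t₀, η ^ 2 ≤ ((2:ℝ) • (∫ ν in t₀..t, S ν) + S₀).det) :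
    ∃ L : ℝ → Matrix n n ℝ, ContDiffOn ℝ 1 L (Ici t₀) ∧
      (∃ M : ℝ, ∀ t ∈ Ici t₀, ‖L t‖ ≤ M) ∧
      (∃ η > 0, ∀ t ∈ Ici t₀, η ≤ |(L t).det|) ∧
      (∀ t ∈ Ici t₀, derivWithin L (Ici t₀) t * (L t)ᵀ = K t + S t) := by
  set P : ℝ → Matrix n n ℝ := fun t => (2:ℝ) • (∫ ν in t₀..t, S ν) + S₀
  have hP : ∀ t ∈ Ici t₀, HasDerivWithinAt P ((2:ℝ) • S t) (Ici t₀) t := fun t ht =>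
    ((hasDerivWithinAt_integral_Ici hSc ht).const_smul (2:ℝ)).add_const S₀
  have hPsymm : ∀ t ∈ Ici t₀, (P t)ᵀ = P t := fun t ht => by
    have hS₀symm : S₀ᵀ = S₀ := by rw [← conjTranspose_eq_transpose_of_trivial, hS₀.1.eq]
    simp only [P, transpose_add, transpose_smul, transpose_intervalIntegral, hS₀symm]
    congr 2
    refine integral_congr fun ν hν => hS ν ?_
    rw [uIcc_of_le ht] at hν
    exact hν.1
  have hPdet : ∀ t ∈ Ici t₀, IsUnit (P t).det := fun t ht =>
    isUnit_iff_ne_zero.2 ((pow_pos hη 2).trans_le (hdet t ht)).ne'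
  set A : ℝ → Matrix n n ℝ := fun t => (K t + S t) * (P t)⁻¹
  have hA : ContinuousOn A (Ici t₀) :=
    (hKc.add hSc).mul ((HasDerivWithinAt.continuousOn hP).matrix_inv hPdet)
  obtain ⟨L, hL, hLP⟩ := exists_hasDerivWithinAt_mul_and_mul_transpose_self_eq hA
    (fun t ht => (hP t ht).congr_deriv
      (mul_inv_mul_add_mul_transpose (hK t ht) (hS t ht) (hPsymm t ht) (hPdet t ht)).symm)
    (by simpa [P] using hS₀.posSemidef)
  have hL' : ∀ t ∈ Ici t₀, derivWithin L (Ici t₀) t = A t * L t := fun t ht =>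
    (hL t ht).derivWithin (uniqueDiffOn_Ici t₀ t ht)
  refine ⟨L, contDiffOn_one_of_hasDerivWithinAt (uniqueDiffOn_Ici t₀) hL
    (hA.mul (HasDerivWithinAt.continuousOn hL)), ⟨μ, fun t ht => ?_⟩, ⟨η, hη, fun t ht => ?_⟩,
    fun t ht => ?_⟩
  · rw [← pow_le_pow_iff_left₀ (norm_nonneg _) hμ.le two_ne_zero, frobenius_norm_sq_eq_trace,
      hLP t ht]
    exact (trace_two_smul_intervalIntegral_add hSc S₀ ht).trans_le
      ((le_abs_self _).trans (htr t ht))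
  · rw [← pow_le_pow_iff_left₀ hη.le (abs_nonneg _) two_ne_zero, sq_abs,
      ← det_mul_transpose_self, hLP t ht]
    exact hdet t ht
  · rw [hL' t ht, mul_assoc, hLP t ht]
    simp only [A, mul_assoc, nonsing_inv_mul _ (hPdet t ht), mul_one]

end Regular

theorem stmt_0_general {m : ℕ} (t₀ : ℝ) (K S : ℝ → Matrix (Fin m) (Fin m) ℝ)
    (hK : ∀ t ∈ Ici t₀, (K t)ᵀ = -K t)
    (hS : ∀ t ∈ Ici t₀, (S t)ᵀ = S t) :
    (∃ L : ℝ → Matrix (Fin m) (Fin m) ℝ,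
        ContDiffOn ℝ 1 L (Ici t₀) ∧
        (∃ M : ℝ, ∀ t ∈ Ici t₀, ‖L t‖ ≤ M) ∧
        (∃ η > 0, ∀ t ∈ Ici t₀, η ≤ |(L t).det|) ∧
        (∀ t ∈ Ici t₀, derivWithin L (Ici t₀) t * (L t)ᵀ = K t + S t)) ↔
      (ContinuousOn K (Ici t₀) ∧ ContinuousOn S (Ici t₀) ∧
        ∃ μ > (0:ℝ), ∃ η > (0:ℝ), ∃ S₀ : Matrix (Fin m) (Fin m) ℝ, S₀.PosDef ∧
          (∀ t ∈ Ici t₀, |2 * (∫ ν in t₀..t, (S ν).trace) + S₀.trace| ≤ μ ^ 2) ∧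
          (∀ t ∈ Ici t₀, η ^ 2 ≤ ((2:ℝ) • (∫ ν in t₀..t, S ν) + S₀).det)) := by
  constructor
  · rintro ⟨L, hL, ⟨M, hM⟩, ⟨η, hη, hLdet⟩, hLeq⟩
    exact integral_bounds_of_regular_solution hK hS hL hM hη hLdet hLeq
  · rintro ⟨hKc, hSc, μ, hμ, η, hη, S₀, hS₀, htr, hdet⟩
    exact exists_regular_solution_of_integral_bounds hK hS hKc hSc hμ hη hS₀ htr hdet

/-- For `K` skew-symmetric valued and `S` symmetric valued on `[t₀,∞)`,
there is a regular on `[t₀,∞)` matrix `L(t)` of class `C¹` with `L̇(t)·L(t)ᵀ = K(t) + S(t)`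
iff `K, S` are continuous and there are `μ, η > 0` and a symmetric positive definite `S₀`
with `|2∫_{t₀}^t tr(S) + tr(S₀)| ≤ μ²` and `det(2∫_{t₀}^t S + S₀) ≥ η²` for all `t ≥ t₀`.
(The norm on matrices is the Frobenius norm.) -/
theorem stmt_0 {m : ℕ} (hm : 1 ≤ m) (t₀ : ℝ) (K S : ℝ → Matrix (Fin m) (Fin m) ℝ)
    (hK : ∀ t ∈ Ici t₀, (K t)ᵀ = -K t)
    (hS : ∀ t ∈ Ici t₀, (S t)ᵀ = S t) :
    (∃ L : ℝ → Matrix (Fin m) (Fin m) ℝ,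
        ContDiffOn ℝ 1 L (Ici t₀) ∧
        (∃ M : ℝ, ∀ t ∈ Ici t₀, ‖L t‖ ≤ M) ∧
        (∃ η > 0, ∀ t ∈ Ici t₀, η ≤ |(L t).det|) ∧
        (∀ t ∈ Ici t₀, derivWithin L (Ici t₀) t * (L t)ᵀ = K t + S t)) ↔
      (ContinuousOn K (Ici t₀) ∧ ContinuousOn S (Ici t₀) ∧
        ∃ μ > (0:ℝ), ∃ η > (0:ℝ), ∃ S₀ : Matrix (Fin m) (Fin m) ℝ, S₀.PosDef ∧
          (∀ t ∈ Ici t₀, |2 * (∫ ν in t₀..t, (S ν).trace) + S₀.trace| ≤ μ ^ 2) ∧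
          (∀ t ∈ Ici t₀, η ^ 2 ≤ ((2:ℝ) • (∫ ν in t₀..t, S ν) + S₀).det)) :=
  stmt_0_general t₀ K S hK hS
end

section
/- Let s ≥ 1, let m₁,…,m_s be positive integers with m₁ + ⋯ + m_s = m, let λ₁ > λ₂ > ⋯ > λ_s be real numbers, and let J_R = diag[J_{m₁}(λ₁),…,J_{m_s}(λ_s)] ∈ M_m(ℝ) be the block-diagonal matrix of the corresponding Jordan blocks. For Q ∈ M_m(ℝ), write Q in blocks Q_{ij} of size m_i × m_j corresponding to this block structure. Then the matrix function L(t) = exp(−J_R t)·Q·exp(J_R t), t ≥ 0, is regular on [0,∞) if and only if Q_{ij} = 0 for all i > j, and for each i the diagonal block Q_{ii} is invertible and commutes with J_{m_i}(λ_i) (i.e., J_{m_i}(λ_i)Q_{ii} = Q_{ii}J_{m_i}(λ_i)). -/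
/-!
Write `J_i = λ_i • 1 + N_i` with `N_i` nilpotent. The `(i, j)` block of `L(t)` is then
`e^{(λ_j - λ_i) t} • e^{-t N_i} Q_{ij} e^{t N_j}`, and the second factor is a matrix of polynomials
in `t` equal to `Q_{ij}` at `t = 0`. Since `L` is smooth and `det L(t) = det Q`, regularity means
that `L` is bounded on `[0, ∞)` and `Q` is invertible. Below the diagonal the exponential factor
grows, so boundedness forces those polynomials, hence `Q_{ij}`, to vanish; on the diagonal it
forces them to be constant, i.e. `e^{-t J_i} Q_{ii} e^{t J_i} = Q_{ii}`, which differentiated at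
`0` says that `Q_{ii}` commutes with `J_i`. Conversely these conditions make the blocks above the
diagonal decay and the diagonal ones constant. Finally, a block upper triangular `Q` is invertible
iff its diagonal blocks are.
-/

open Matrix Set NormedSpace

attribute [local instance] Matrix.frobeniusNormedAddCommGroup Matrix.frobeniusNormedSpace

/-- The Jordan block `J_p(λ) = λE + H`, with `λ` on the diagonal and `1` on the first
superdiagonal. -/
def jordanBlock (p : ℕ) (l : ℝ) : Matrix (Fin p) (Fin p) ℝ :=
  Matrix.of fun i j => if j = i then l else if (j : ℕ) = (i : ℕ) + 1 then 1 else 0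

/-- A matrix-valued function is *regular on `[0,∞)`* : it is `C¹`, has bounded norm,
and `|det L(t)|` is bounded away from zero. -/
def RegularOn {ι : Type*} [Fintype ι] [DecidableEq ι] (L : ℝ → Matrix ι ι ℝ) : Prop :=
  ContDiffOn ℝ 1 L (Ici (0:ℝ)) ∧ (∃ M : ℝ, ∀ t ∈ Ici (0:ℝ), ‖L t‖ ≤ M) ∧
    (∃ η > (0:ℝ), ∀ t ∈ Ici (0:ℝ), η ≤ |(L t).det|)

open Finset Filter Polynomial Bornology Topology

attribute [local instance] Matrix.frobeniusNormedRing Matrix.frobeniusNormedAlgebra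

theorem isBounded_image_Ici_of_tendsto {E : Type*} [PseudoMetricSpace E] {f : ℝ → E}
    (hf : Continuous f) {x : E} (h : Tendsto f atTop (𝓝 x)) (a : ℝ) :
    IsBounded (f '' Ici a) := by
  obtain ⟨s, hs, hbdd⟩ := Metric.exists_isBounded_image_of_tendsto h
  obtain ⟨T, hT⟩ := mem_atTop_sets.1 hs
  refine (((isCompact_Icc (a := a) (b := T)).image hf).isBounded.union hbdd).subset ?_
  rw [← image_union]
  refine image_mono fun t ht => ?_
  rcases le_total t T with htT | hTt
  exacts [Or.inl ⟨ht, htT⟩, Or.inr (hT t hTt)]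

theorem Bornology.IsBounded.isBoundedUnder_norm_atTop {E : Type*} [SeminormedAddCommGroup E]
    {f : ℝ → E} {a : ℝ} (h : IsBounded (f '' Ici a)) :
    IsBoundedUnder (· ≤ ·) atTop fun t => ‖f t‖ := by
  obtain ⟨M, hM⟩ := isBounded_iff_forall_norm_le.1 h
  exact ⟨M, eventually_map.2 <| (eventually_ge_atTop a).mono fun t ht => hM _ ⟨t, ht, rfl⟩⟩

namespace Polynomial

theorem eq_zero_of_isBounded_exp_mul_eval {c : ℝ} (hc : 0 < c) {r : ℝ[X]}
    (h : IsBounded ((fun t => Real.exp (c * t) * r.eval t) '' Ici 0)) : r = 0 := by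
  have hdecay : Tendsto (fun t => Real.exp (-c * t)) atTop (𝓝 0) :=
    Real.tendsto_exp_atBot.comp (tendsto_id.const_mul_atTop_of_neg (neg_neg_of_pos hc))
  have hr : Tendsto (fun t => r.eval t) atTop (𝓝 0) := by
    refine (hdecay.zero_mul_isBoundedUnder_le h.isBoundedUnder_norm_atTop).congr fun t => ?_
    simp [← mul_assoc, ← Real.exp_add]
  exact leadingCoeff_eq_zero.1 ((tendsto_nhds_iff r).1 hr).1

theorem eval_eq_eval_zero_of_isBounded {r : ℝ[X]}
    (h : IsBounded ((fun t => r.eval t) '' Ici 0)) (t : ℝ) : r.eval t = r.eval 0 := by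
  rw [eq_C_of_degree_le_zero ((isBoundedUnder_abs_atTop_iff r).1 h.isBoundedUnder_norm_atTop)]
  simp

theorem isBounded_exp_mul_eval {c : ℝ} (hc : c < 0) (r : ℝ[X]) :
    IsBounded ((fun t => Real.exp (c * t) * r.eval t) '' Ici 0) := by
  refine isBounded_image_Ici_of_tendsto (by fun_prop) (x := 0) ?_ 0
  have hsub : (fun t => Real.exp (c * t) * r.eval t)
      = (fun u => (r.comp (C (-c)⁻¹ * X)).eval u / Real.exp u) ∘ (fun t => -c * t) := by
    funext t
    simp [field, hc.ne, Real.exp_neg]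
  rw [hsub]
  exact (tendsto_div_exp_atTop _).comp (tendsto_id.const_mul_atTop (neg_pos.2 hc))

end Polynomial

theorem NormedSpace.exp_eq_sum_range_of_pow_eq_zero {𝔸 : Type*} [Ring 𝔸] [Algebra ℝ 𝔸]
    [TopologicalSpace 𝔸] [IsTopologicalRing 𝔸] [T2Space 𝔸] {x : 𝔸} {k : ℕ} (hx : x ^ k = 0) :
    exp x = ∑ j ∈ range k, (j.factorial : ℝ)⁻¹ • x ^ j := by
  rw [exp_eq_tsum ℝ]
  refine tsum_eq_sum fun j hj => ?_
  rw [pow_eq_zero_of_le (not_lt.1 (mem_range.not.1 hj)) hx, smul_zero]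

section BanachAlgebra

variable {𝔸 : Type*} [NormedRing 𝔸] [NormedAlgebra ℝ 𝔸] [CompleteSpace 𝔸]

theorem NormedSpace.contDiff_exp_smul (x : 𝔸) {n : WithTop ℕ∞} :
    ContDiff ℝ n fun t : ℝ => exp (t • x) :=
  contDiff_iff_contDiffAt.2 fun t =>
    (exp_analytic (𝕂 := ℝ) (t • x)).contDiffAt.comp t (contDiff_id.smul contDiff_const).contDiffAt

theorem commute_of_forall_mul_exp_smul {x y : 𝔸}
    (h : ∀ t : ℝ, y * exp (t • x) = exp (t • x) * y) : Commute x y := by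
  have hleft := (hasDerivAt_exp_smul_const (𝕂 := ℝ) x 0).const_mul y
  have hright := (hasDerivAt_exp_smul_const (𝕂 := ℝ) x 0).mul_const y
  simp only [funext h, zero_smul, exp_zero, one_mul] at hleft hright
  exact (hleft.unique hright).symm

end BanachAlgebra

namespace Matrix

theorem exists_map_eval_eq_exp_smul {n : Type*} [Fintype n] [DecidableEq n] {N : Matrix n n ℝ}
    {k : ℕ} (hN : N ^ k = 0) : ∃ P : Matrix n n ℝ[X], ∀ t : ℝ, exp (t • N) = P.map (eval t) := by
  refine ⟨∑ j ∈ range k, (N ^ j).map fun a => C (a / j.factorial) * X ^ j, fun t => ?_⟩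
  rw [NormedSpace.exp_eq_sum_range_of_pow_eq_zero (k := k)
    (by rw [_root_.smul_pow, hN, smul_zero])]
  ext a b
  simp only [sum_apply, map_apply, smul_apply, _root_.smul_pow, eval_finsetSum, eval_mul, eval_C,
    eval_pow, eval_X, smul_eq_mul]
  refine sum_congr rfl fun j _ => ?_
  ring

theorem isBounded_image_iff_forall_apply {β m n : Type*} [Fintype m] [Fintype n]
    (L : β → Matrix m n ℝ) (S : Set β) :
    IsBounded (L '' S) ↔ ∀ i j, IsBounded ((fun t => L t i j) '' S) := by
  -- the Frobenius norm induces the product bornology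
  refine (forall_isBounded_image_eval_iff (X := fun _ : m => n → ℝ) (s := L '' S)).symm.trans
    (forall_congr' fun i => (forall_isBounded_image_eval_iff).symm.trans
      (forall_congr' fun j => ?_))
  exact iff_of_eq (congrArg Bornology.IsBounded
    ((Set.image_image _ _ _).trans (Set.image_image _ _ _)))

section SigmaBlock

variable {ι α : Type*} {m' n' : ι → Type*}

def sigmaBlock (M : Matrix (Σ i, m' i) (Σ j, n' j) α) (i j : ι) : Matrix (m' i) (n' j) α :=
  of fun a b => M ⟨i, a⟩ ⟨j, b⟩

@[simp]
theorem sigmaBlock_apply (M : Matrix (Σ i, m' i) (Σ j, n' j) α) (i j : ι) (a : m' i) (b : n' j) :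
    sigmaBlock M i j a b = M ⟨i, a⟩ ⟨j, b⟩ :=
  rfl

variable [Fintype ι] [DecidableEq ι] [NonUnitalNonAssocSemiring α]

theorem sigmaBlock_blockDiagonal'_mul [∀ i, Fintype (m' i)] (A : ∀ i, Matrix (m' i) (m' i) α)
    (M : Matrix (Σ i, m' i) (Σ j, n' j) α) (i j : ι) :
    sigmaBlock (blockDiagonal' A * M) i j = A i * sigmaBlock M i j := by
  ext a b
  simp [mul_apply, Fintype.sum_sigma, blockDiagonal'_apply]

theorem sigmaBlock_mul_blockDiagonal' [∀ i, Fintype (n' i)] (M : Matrix (Σ i, m' i) (Σ j, n' j) α)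
    (B : ∀ j, Matrix (n' j) (n' j) α) (i j : ι) :
    sigmaBlock (M * blockDiagonal' B) i j = sigmaBlock M i j * B j := by
  ext a b
  simp [mul_apply, Fintype.sum_sigma, blockDiagonal'_apply]

end SigmaBlock

section BlockTriangular

variable {ι R : Type*} {m' : ι → Type*} [Fintype ι] [LinearOrder ι] [∀ i, Fintype (m' i)]
  [∀ i, DecidableEq (m' i)] [CommRing R] {M : Matrix (Σ i, m' i) (Σ i, m' i) R}

theorem BlockTriangular.det_eq_prod_det_sigmaBlock (h : M.BlockTriangular Sigma.fst) :
    M.det = ∏ k, (sigmaBlock M k k).det := by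
  rw [h.det_fintype]
  refine prod_congr rfl fun k _ => ?_
  rw [← det_submatrix_equiv_self (Equiv.sigmaSubtype k).symm]
  rfl

theorem BlockTriangular.isUnit_iff_forall_isUnit_sigmaBlock (h : M.BlockTriangular Sigma.fst) :
    IsUnit M ↔ ∀ k, IsUnit (sigmaBlock M k k) := by
  simp only [isUnit_iff_isUnit_det, h.det_eq_prod_det_sigmaBlock, IsUnit.prod_univ_iff]

end BlockTriangular

end Matrix

theorem jordanBlock_eq_smul_one_add (p : ℕ) (l : ℝ) :
    jordanBlock p l = l • (1 : Matrix (Fin p) (Fin p) ℝ) + jordanBlock p 0 := by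
  ext i j
  by_cases h : j = i
  · subst h; simp [jordanBlock]
  · simp [jordanBlock, h, Ne.symm h]

theorem jordanBlock_zero_isUpperTriangular (p : ℕ) : (jordanBlock p 0).IsUpperTriangular := by
  intro i j hji
  have hne : (j : ℕ) ≠ i + 1 := by have : (j : ℕ) < i := hji; omega
  simp [jordanBlock, hne]

theorem jordanBlock_zero_pow_self (p : ℕ) : jordanBlock p 0 ^ p = 0 := by
  have hdiag : ∀ i, jordanBlock p 0 i i = 0 := by simp [jordanBlock]
  simpa [charpoly_of_isUpperTriangular _ (jordanBlock_zero_isUpperTriangular p), hdiag]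
    using aeval_self_charpoly (jordanBlock p 0)

theorem exp_smul_jordanBlock (p : ℕ) (l t : ℝ) :
    exp (t • jordanBlock p l) = Real.exp (t * l) • exp (t • jordanBlock p 0) := by
  have hscalar : exp ((t * l) • (1 : Matrix (Fin p) (Fin p) ℝ)) = Real.exp (t * l) • 1 := by
    rw [← Algebra.algebraMap_eq_smul_one, ← Algebra.algebraMap_eq_smul_one, Real.exp_eq_exp_ℝ]
    exact (algebraMap_exp_comm (t * l)).symm
  rw [jordanBlock_eq_smul_one_add, smul_add, smul_smul,
    Matrix.exp_add_of_commute _ _ (((Commute.one_left _).smul_left _).smul_right _), hscalar,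
    smul_mul_assoc, one_mul]

section ExpConj

variable {n : Type*} [Fintype n] [DecidableEq n]

noncomputable def expConj (J Q : Matrix n n ℝ) (t : ℝ) : Matrix n n ℝ :=
  exp ((-t) • J) * Q * exp (t • J)

theorem exp_neg_smul_mul_exp_smul (J : Matrix n n ℝ) (t : ℝ) :
    exp ((-t) • J) * exp (t • J) = 1 := by
  rw [← Matrix.exp_add_of_commute _ _ (((Commute.refl J).smul_right t).smul_left (-t)),
    ← add_smul, neg_add_cancel, zero_smul, exp_zero]

theorem expConj_zero (J Q : Matrix n n ℝ) : expConj J Q 0 = Q := by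
  simp [expConj]

theorem det_expConj (J Q : Matrix n n ℝ) (t : ℝ) : (expConj J Q t).det = Q.det := by
  rw [expConj, det_mul, det_mul, mul_right_comm, ← det_mul, exp_neg_smul_mul_exp_smul, det_one,
    one_mul]

theorem contDiff_expConj (J Q : Matrix n n ℝ) {k : WithTop ℕ∞} : ContDiff ℝ k (expConj J Q) := by
  have hexp := NormedSpace.contDiff_exp_smul (n := k) J
  exact ((hexp.comp contDiff_neg).mul contDiff_const).mul hexp

theorem expConj_eq_self_of_commute {J Q : Matrix n n ℝ} (h : Commute J Q) (t : ℝ) :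
    expConj J Q t = Q := by
  rw [expConj, ((h.smul_left (-t)).exp_left).eq, mul_assoc, exp_neg_smul_mul_exp_smul, mul_one]

theorem commute_of_forall_expConj_eq_self {J Q : Matrix n n ℝ} (h : ∀ t, expConj J Q t = Q) :
    Commute J Q := by
  refine commute_of_forall_mul_exp_smul fun t => ?_
  have hinv : exp (t • J) * exp ((-t) • J) = 1 := by
    simpa using exp_neg_smul_mul_exp_smul J (-t)
  calc Q * exp (t • J) = exp (t • J) * exp ((-t) • J) * Q * exp (t • J) := by rw [hinv, one_mul]
    _ = exp (t • J) * expConj J Q t := by simp only [expConj, mul_assoc]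
    _ = exp (t • J) * Q := by rw [h t]

theorem regularOn_expConj_iff (J Q : Matrix n n ℝ) :
    RegularOn (expConj J Q) ↔ IsBounded (expConj J Q '' Ici 0) ∧ IsUnit Q := by
  simp only [RegularOn, det_expConj, (contDiff_expConj J Q).contDiffOn, true_and,
    isBounded_iff_forall_norm_le, forall_mem_image, isUnit_iff_isUnit_det Q, isUnit_iff_ne_zero,
    ← abs_pos]
  exact and_congr Iff.rfl ⟨fun ⟨_, hη, h⟩ => hη.trans_le (h 0 self_mem_Ici),
    fun hQ => ⟨_, hQ, fun _ _ => le_rfl⟩⟩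

end ExpConj

section BlockDiagonal

variable {ι : Type*} {m' : ι → Type*} [Fintype ι] [DecidableEq ι] [∀ i, Fintype (m' i)]
  [∀ i, DecidableEq (m' i)]

theorem exp_smul_blockDiagonal' (A : ∀ i, Matrix (m' i) (m' i) ℝ) (t : ℝ) :
    exp (t • blockDiagonal' A) = blockDiagonal' fun i => exp (t • A i) := by
  rw [← blockDiagonal'_smul, Matrix.exp_blockDiagonal']
  congr 1
  funext i
  exact Pi.coe_exp _ _

theorem sigmaBlock_expConj_blockDiagonal' (A : ∀ i, Matrix (m' i) (m' i) ℝ)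
    (Q : Matrix (Σ i, m' i) (Σ i, m' i) ℝ) (t : ℝ) (i j : ι) :
    sigmaBlock (expConj (blockDiagonal' A) Q t) i j
      = exp ((-t) • A i) * sigmaBlock Q i j * exp (t • A j) := by
  rw [expConj, exp_smul_blockDiagonal', exp_smul_blockDiagonal',
    sigmaBlock_mul_blockDiagonal', sigmaBlock_blockDiagonal'_mul]

theorem sigmaBlock_expConj_blockDiagonal'_self (A : ∀ i, Matrix (m' i) (m' i) ℝ)
    (Q : Matrix (Σ i, m' i) (Σ i, m' i) ℝ) (t : ℝ) (i : ι) :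
    sigmaBlock (expConj (blockDiagonal' A) Q t) i i = expConj (A i) (sigmaBlock Q i i) t :=
  sigmaBlock_expConj_blockDiagonal' A Q t i i

end BlockDiagonal

def jordanMatrix {s : ℕ} (msz : Fin s → ℕ) (lam : Fin s → ℝ) :
    Matrix (Σ i, Fin (msz i)) (Σ i, Fin (msz i)) ℝ :=
  blockDiagonal' fun i => jordanBlock (msz i) (lam i)

theorem exists_sigmaBlock_expConj_jordanMatrix_eq {s : ℕ} {msz : Fin s → ℕ} (lam : Fin s → ℝ)
    (Q : Matrix (Σ i, Fin (msz i)) (Σ i, Fin (msz i)) ℝ) (i j : Fin s) :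
    ∃ R : Matrix (Fin (msz i)) (Fin (msz j)) ℝ[X], ∀ t,
      sigmaBlock (expConj (jordanMatrix msz lam) Q t) i j
        = Real.exp ((lam j - lam i) * t) • R.map (eval t) := by
  obtain ⟨P, hP⟩ := exists_map_eval_eq_exp_smul (N := -jordanBlock (msz i) 0) (k := msz i)
    (by rw [neg_pow, jordanBlock_zero_pow_self, mul_zero])
  obtain ⟨P', hP'⟩ := exists_map_eval_eq_exp_smul (jordanBlock_zero_pow_self (msz j))
  refine ⟨P * (sigmaBlock Q i j).map C * P', fun t => ?_⟩
  rw [jordanMatrix, sigmaBlock_expConj_blockDiagonal', exp_smul_jordanBlock (msz i) (lam i),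
    exp_smul_jordanBlock (msz j) (lam j), neg_smul, ← smul_neg, hP, hP', ← coe_evalRingHom,
    Matrix.map_mul, Matrix.map_mul, Matrix.map_map]
  simp only [coe_evalRingHom, Function.comp_def, eval_C, Matrix.map_id', Matrix.smul_mul,
    Matrix.mul_smul, smul_smul, ← Real.exp_add]
  ring_nf

section JordanMatrix

variable {s : ℕ} {msz : Fin s → ℕ} {lam : Fin s → ℝ}
  {Q : Matrix (Σ i, Fin (msz i)) (Σ i, Fin (msz i)) ℝ}

theorem sigmaBlock_eq_zero_of_isBounded_expConj
    (hQ : IsBounded (expConj (jordanMatrix msz lam) Q '' Ici 0)) {i j : Fin s}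
    (hij : lam i < lam j) : sigmaBlock Q i j = 0 := by
  obtain ⟨R, hR⟩ := exists_sigmaBlock_expConj_jordanMatrix_eq lam Q i j
  have hR0 : R = 0 := by
    refine Matrix.ext fun a b => eq_zero_of_isBounded_exp_mul_eval (sub_pos.2 hij) ?_
    convert (isBounded_image_iff_forall_apply _ _).1 hQ ⟨i, a⟩ ⟨j, b⟩ using 3 with t
    simpa using (congrFun (congrFun (hR t) a) b).symm
  simpa [hR0, expConj_zero] using hR 0

theorem commute_of_isBounded_expConj
    (hQ : IsBounded (expConj (jordanMatrix msz lam) Q '' Ici 0)) (i : Fin s) :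
    Commute (jordanBlock (msz i) (lam i)) (sigmaBlock Q i i) := by
  obtain ⟨R, hR⟩ := exists_sigmaBlock_expConj_jordanMatrix_eq lam Q i i
  have hconst : ∀ t, R.map (eval t) = R.map (eval 0) := fun t => by
    ext a b
    refine eval_eq_eval_zero_of_isBounded ?_ t
    convert (isBounded_image_iff_forall_apply _ _).1 hQ ⟨i, a⟩ ⟨i, b⟩ using 3 with u
    simpa using (congrFun (congrFun (hR u) a) b).symm
  have hblock : ∀ t, sigmaBlock (expConj (jordanMatrix msz lam) Q t) i i = R.map (eval 0) :=
    fun t => by simp [hR, hconst]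
  refine commute_of_forall_expConj_eq_self fun t => ?_
  calc expConj (jordanBlock (msz i) (lam i)) (sigmaBlock Q i i) t
      = sigmaBlock (expConj (jordanMatrix msz lam) Q t) i i :=
        (sigmaBlock_expConj_blockDiagonal'_self (fun i => jordanBlock (msz i) (lam i)) Q t i).symm
    _ = sigmaBlock Q i i := by rw [hblock, ← hblock 0, expConj_zero]

theorem isBounded_expConj_of_blockTriangular (hlam : StrictAnti lam)
    (hQ : Q.BlockTriangular Sigma.fst)
    (hcomm : ∀ i, Commute (jordanBlock (msz i) (lam i)) (sigmaBlock Q i i)) :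
    IsBounded (expConj (jordanMatrix msz lam) Q '' Ici 0) := by
  refine (isBounded_image_iff_forall_apply _ _).2 fun ⟨i, a⟩ ⟨j, b⟩ => ?_
  rcases lt_or_ge i j with hij | hji
  · obtain ⟨R, hR⟩ := exists_sigmaBlock_expConj_jordanMatrix_eq lam Q i j
    convert isBounded_exp_mul_eval (sub_neg.2 (hlam hij)) (R a b) using 3 with t
    simpa using congrFun (congrFun (hR t) a) b
  · have hconst :
        ∀ t, sigmaBlock (expConj (jordanMatrix msz lam) Q t) i j = sigmaBlock Q i j := by
      rcases hji.eq_or_lt with rfl | hji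
      · intro t
        rw [jordanMatrix, sigmaBlock_expConj_blockDiagonal'_self,
          expConj_eq_self_of_commute (hcomm j)]
      · have hzero : sigmaBlock Q i j = 0 := Matrix.ext fun a b => hQ hji
        intro t
        rw [jordanMatrix, sigmaBlock_expConj_blockDiagonal', hzero, Matrix.mul_zero,
          Matrix.zero_mul]
    exact isBounded_singleton.subset
      (image_subset_iff.2 fun t _ => congrFun (congrFun (hconst t) a) b)

end JordanMatrix

theorem stmt_8_general (s : ℕ) (msz : Fin s → ℕ)
    (lam : Fin s → ℝ) (hlam : ∀ i j : Fin s, i < j → lam j < lam i)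
    (Q : Matrix (Σ i, Fin (msz i)) (Σ i, Fin (msz i)) ℝ) :
    (RegularOn fun t : ℝ =>
        exp ((-t) • blockDiagonal' fun i => jordanBlock (msz i) (lam i)) * Q *
          exp (t • blockDiagonal' fun i => jordanBlock (msz i) (lam i))) ↔
      ((∀ i j : Fin s, j < i → ∀ (a : Fin (msz i)) (b : Fin (msz j)), Q ⟨i, a⟩ ⟨j, b⟩ = 0) ∧
        ∀ i : Fin s,
          IsUnit (Matrix.of fun a b => Q ⟨i, a⟩ ⟨i, b⟩ : Matrix (Fin (msz i)) (Fin (msz i)) ℝ) ∧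
          jordanBlock (msz i) (lam i) * Matrix.of (fun a b => Q ⟨i, a⟩ ⟨i, b⟩)
            = Matrix.of (fun a b => Q ⟨i, a⟩ ⟨i, b⟩) * jordanBlock (msz i) (lam i)) := by
  change RegularOn (expConj (jordanMatrix msz lam) Q) ↔ _
  rw [regularOn_expConj_iff]
  constructor
  · rintro ⟨hbdd, hunit⟩
    have hQ : Q.BlockTriangular Sigma.fst := fun x y hyx =>
      congrFun (congrFun (sigmaBlock_eq_zero_of_isBounded_expConj hbdd (hlam _ _ hyx)) x.2) y.2
    exact ⟨fun i j hji a b => hQ (i := ⟨i, a⟩) (j := ⟨j, b⟩) hji,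
      fun i => ⟨hQ.isUnit_iff_forall_isUnit_sigmaBlock.1 hunit i,
        commute_of_isBounded_expConj hbdd i⟩⟩
  · rintro ⟨hzero, hdiag⟩
    have hQ : Q.BlockTriangular Sigma.fst := fun x y hyx => hzero x.1 y.1 hyx x.2 y.2
    exact ⟨isBounded_expConj_of_blockTriangular hlam hQ fun i => (hdiag i).2,
      hQ.isUnit_iff_forall_isUnit_sigmaBlock.2 fun i => (hdiag i).1⟩

/-- Let `J_R = diag[J_{m₁}(λ₁),…,J_{m_s}(λ_s)]` with `λ₁ > ⋯ > λ_s`.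
Then `L(t) = exp(−J_R t)·Q·exp(J_R t)` is regular on `[0,∞)` iff `Q` is block upper
triangular and each diagonal block `Q_{ii}` is invertible and commutes with `J_{m_i}(λ_i)`. -/
theorem stmt_8 (s : ℕ) (hs : 1 ≤ s) (msz : Fin s → ℕ) (hmsz : ∀ i, 1 ≤ msz i)
    (m : ℕ) (hm : ∑ i, msz i = m)
    (lam : Fin s → ℝ) (hlam : ∀ i j : Fin s, i < j → lam j < lam i)
    (Q : Matrix (Σ i, Fin (msz i)) (Σ i, Fin (msz i)) ℝ) :
    (RegularOn fun t : ℝ =>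
        exp ((-t) • blockDiagonal' fun i => jordanBlock (msz i) (lam i)) * Q *
          exp (t • blockDiagonal' fun i => jordanBlock (msz i) (lam i))) ↔
      ((∀ i j : Fin s, j < i → ∀ (a : Fin (msz i)) (b : Fin (msz j)), Q ⟨i, a⟩ ⟨j, b⟩ = 0) ∧
        ∀ i : Fin s,
          IsUnit (Matrix.of fun a b => Q ⟨i, a⟩ ⟨i, b⟩ : Matrix (Fin (msz i)) (Fin (msz i)) ℝ) ∧
          jordanBlock (msz i) (lam i) * Matrix.of (fun a b => Q ⟨i, a⟩ ⟨i, b⟩)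
            = Matrix.of (fun a b => Q ⟨i, a⟩ ⟨i, b⟩) * jordanBlock (msz i) (lam i)) :=
  stmt_8_general s msz lam hlam Q
end

section
/- Let Z, A ∈ M_m(ℝ) and for each integer n ≥ 0 let 𝒳_n = { X ∈ M_m(ℝ) : {Z A^(k) X} = 0 for all 0 ≤ k ≤ n }. If 𝒳_n = 𝒳_{n+1} for some n ≥ 0, then 𝒳_n = 𝒳_k for every k ≥ n. -/
open Matrix

/-- The iterated commutator `{Z A^(n)}`: `{Z A^(0)} = Z`,
`{Z A^(n+1)} = [{Z A^(n)}, A]` where `[X, Y] = X*Y - Y*X`. -/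
def itComm {m : ℕ} (Z A : Matrix (Fin m) (Fin m) ℝ) : ℕ → Matrix (Fin m) (Fin m) ℝ
  | 0 => Z
  | n + 1 => itComm Z A n * A - A * itComm Z A n

/-- The solution set `𝒳_n` of the system `{Z A^(k) X} = 0`, `0 ≤ k ≤ n`. -/
def solSet {m : ℕ} (Z A : Matrix (Fin m) (Fin m) ℝ) (n : ℕ) :
    Set (Matrix (Fin m) (Fin m) ℝ) :=
  { X | ∀ k ≤ n, itComm Z A k * X - X * itComm Z A k = 0 }

/-! The Jacobi identity `[[C, A], X] = [C, [A, X]] + [[C, X], A]` with `C = {Z A^(k)}` shows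
that `[A, X] ∈ 𝒳_n` whenever `X ∈ 𝒳_{n+1}`. So if `𝒳_n = 𝒳_{n+1}` and `X ∈ 𝒳_{n+1}`, then
`[A, X] ∈ 𝒳_{n+1}`, and the same identity with `C = {Z A^(n+1)}` gives `{Z A^(n+2) X} = 0`,
that is `𝒳_{n+1} = 𝒳_{n+2}`; induction does the rest. -/

theorem commutator_jacobi {R : Type*} [Ring R] (C A X : R) :
    (C * A - A * C) * X - X * (C * A - A * C) =
      (C * (A * X - X * A) - (A * X - X * A) * C) + ((C * X - X * C) * A - A * (C * X - X * C)) := by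
  noncomm_ring

section

variable {m : ℕ} {Z A X : Matrix (Fin m) (Fin m) ℝ} {n : ℕ}

theorem itComm_succ : itComm Z A (n + 1) = itComm Z A n * A - A * itComm Z A n := rfl

theorem mem_solSet_succ :
    X ∈ solSet Z A (n + 1) ↔
      X ∈ solSet Z A n ∧ itComm Z A (n + 1) * X - X * itComm Z A (n + 1) = 0 := by
  simp only [solSet, Set.mem_ofPred_eq, Nat.le_succ_iff, or_imp, forall_and, forall_eq]

variable (Z A) in
theorem solSet_antitone : Antitone (solSet Z A) :=
  fun _ _ hle _ hX k hk => hX k (hk.trans hle)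

theorem commutator_mem_solSet (hX : X ∈ solSet Z A (n + 1)) : A * X - X * A ∈ solSet Z A n := by
  intro k hk
  have key := commutator_jacobi (itComm Z A k) A X
  rw [← itComm_succ, hX (k + 1) (by omega), hX k (by omega)] at key
  simpa using key.symm

theorem solSet_succ_eq_succ_succ (h : solSet Z A n = solSet Z A (n + 1)) :
    solSet Z A (n + 1) = solSet Z A (n + 2) := by
  refine Set.Subset.antisymm (fun X hX => mem_solSet_succ.2 ⟨hX, ?_⟩)
    (solSet_antitone Z A n.succ.le_succ)
  have hAX : A * X - X * A ∈ solSet Z A (n + 1) := h ▸ commutator_mem_solSet hX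
  have key := commutator_jacobi (itComm Z A (n + 1)) A X
  rw [← itComm_succ, hAX (n + 1) le_rfl, hX (n + 1) le_rfl] at key
  simpa using key

end

/-- If `𝒳_n = 𝒳_{n+1}` for some `n ≥ 0`, then `𝒳_n = 𝒳_k`
for every `k ≥ n`. -/
theorem stmt_10 {m : ℕ} (Z A : Matrix (Fin m) (Fin m) ℝ) (n : ℕ)
    (h : solSet Z A n = solSet Z A (n + 1)) :
    ∀ k ≥ n, solSet Z A n = solSet Z A k := by
  have stable : ∀ k ≥ n, solSet Z A k = solSet Z A (k + 1) := by
    intro k hk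
    induction k, hk using Nat.le_induction with
    | base => exact h
    | succ k _ ih => exact solSet_succ_eq_succ_succ ih
  intro k hk
  induction k, hk using Nat.le_induction with
  | base => rfl
  | succ k hk ih => exact ih.trans (stable k hk)
end

section
/- Let A, V, Z, C ∈ M_m(ℝ) with C invertible, and define L(t) = exp(−A·t/2)·C·exp(V·t/2) for t ≥ 0 (so that L(2t) = exp(−At)C exp(Vt)). Then the commutation identity [Z, L(t)C⁻¹] = 0 holds for all t ≥ 0 if and only if {Z A^(n) (CVC⁻¹ − A)} = 0 for every integer n ≥ 0. -/
open Matrix NormedSpace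

/-!
Put `W = C V C⁻¹` and `s = t / 2`. Then `L t * C⁻¹ = exp (-sA) exp (sW)`, and `Z` commutes with it
iff `exp (sA) Z exp (-sA) = exp (sW) Z exp (-sW)`, i.e. `exp (s ad A) Z = exp (s ad W) Z` with
`ad X = [X, ·]` acting on the matrix algebra. For `s ≥ 0` this holds iff `(ad A)ⁿ Z = (ad W)ⁿ Z`
for every `n`: differentiate at `s = 0` for one direction, sum the exponential series for the
other. As `ad W = ad A + ad (W - A)`, the latter says that `ad (W - A)` kills every `(ad A)ⁿ Z`,
which up to the sign `(-1)ⁿ` is the iterated commutator `{Z A^(n)}`.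
-/

open Set

theorem commute_invOf_mul_iff {M : Type*} [Monoid M] {u v : M} [Invertible u] [Invertible v]
    (z : M) : Commute z (⅟u * v) ↔ u * z * ⅟u = v * z * ⅟v := by
  rw [Commute, SemiconjBy, mul_assoc, ← mul_left_eq_iff_eq_invOf_mul, eq_comm (a := u * z * ⅟u),
    mul_invOf_eq_iff_eq_mul_right, eq_comm]
  simp only [mul_assoc]

theorem HasDerivAt.eq_of_eqOn_Ici {E : Type*} [NormedAddCommGroup E] [NormedSpace ℝ E]
    {f g : ℝ → E} {f' g' : E} {a s : ℝ} (hf : HasDerivAt f f' s) (hg : HasDerivAt g g' s)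
    (hfg : EqOn f g (Ici a)) (hs : a ≤ s) : f' = g' :=
  (uniqueDiffOn_Ici a s hs).eq_deriv _ hf.hasDerivWithinAt
    (hg.hasDerivWithinAt.congr (fun _ hx => hfg hx) (hfg (mem_Ici.2 hs)))

section ContinuousLinearMap

variable {R M : Type*} [Ring R] [AddCommGroup M] [Module R M] [TopologicalSpace M]
  [IsTopologicalAddGroup M]

theorem neg_pow_apply (T : M →L[R] M) (n : ℕ) (z : M) :
    ((-T) ^ n) z = (-1 : ℤ) ^ n • (T ^ n) z := by
  rw [← neg_one_zsmul T, smul_pow, _root_.smul_apply]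

theorem pow_apply_eq_pow_apply_iff (T S : M →L[R] M) (z : M) :
    (∀ n, (T ^ n) z = (S ^ n) z) ↔ ∀ n, (S - T) ((T ^ n) z) = 0 := by
  refine ⟨fun h n => ?_, fun h n => ?_⟩
  · rw [_root_.sub_apply, sub_eq_zero]
    calc S ((T ^ n) z) = (S ^ (n + 1)) z := by rw [h, pow_succ', mul_apply_eq_comp]
      _ = T ((T ^ n) z) := by rw [← h, pow_succ', mul_apply_eq_comp]
  · induction n with
    | zero => rfl
    | succ n ih =>
      have hn := h n
      rw [_root_.sub_apply, sub_eq_zero] at hn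
      rw [pow_succ', mul_apply_eq_comp, ← hn, ih, pow_succ', mul_apply_eq_comp]

end ContinuousLinearMap

section BanachSpace

variable {E : Type*} [NormedAddCommGroup E] [NormedSpace ℝ E] [CompleteSpace E]

theorem hasDerivAt_exp_smul_apply (T : E →L[ℝ] E) (v : E) (s : ℝ) :
    HasDerivAt (fun s : ℝ => exp (s • T) v) (exp (s • T) (T v)) s := by
  simpa using (hasDerivAt_exp_smul_const T s).clm_apply (hasDerivAt_const s v)

theorem exp_apply_eq_of_pow_apply_eq {T S : E →L[ℝ] E} {z : E}
    (h : ∀ n, (T ^ n) z = (S ^ n) z) : exp T z = exp S z := by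
  have hT := (expSeries_summable' (𝕂 := ℝ) T).hasSum.mapL (ContinuousLinearMap.apply ℝ E z)
  have hS := (expSeries_summable' (𝕂 := ℝ) S).hasSum.mapL (ContinuousLinearMap.apply ℝ E z)
  rw [exp_eq_tsum ℝ]
  simp only [ContinuousLinearMap.apply_apply, _root_.smul_apply, h] at hT hS ⊢
  exact hT.unique hS

/-- One-sided equality suffices: derivatives within `[0, ∞)` are unique, so both sides can be
differentiated `n` times at `s = 0`. -/
theorem exp_smul_apply_eq_iff (T S : E →L[ℝ] E) (z : E) :
    (∀ s : ℝ, 0 ≤ s → exp (s • T) z = exp (s • S) z) ↔ ∀ n, (T ^ n) z = (S ^ n) z := by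
  refine ⟨fun h n => ?_, fun h s _ => exp_apply_eq_of_pow_apply_eq fun n => ?_⟩
  · have hderiv : ∀ n, ∀ s : ℝ, 0 ≤ s → exp (s • T) ((T ^ n) z) = exp (s • S) ((S ^ n) z) := by
      intro n
      induction n with
      | zero => simpa using h
      | succ n ih =>
        intro s hs
        rw [pow_succ', pow_succ']
        exact (hasDerivAt_exp_smul_apply T _ s).eq_of_eqOn_Ici (hasDerivAt_exp_smul_apply S _ s)
          ih hs
    simpa using hderiv n 0 le_rfl
  · simp only [smul_pow, _root_.smul_apply, h n]

end BanachSpace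

section BanachAlgebra

variable {𝔸 : Type*} [NormedRing 𝔸] [NormedAlgebra ℝ 𝔸]

variable (𝔸) in
noncomputable def adCLM : 𝔸 →L[ℝ] 𝔸 →L[ℝ] 𝔸 :=
  ContinuousLinearMap.mul ℝ 𝔸 - (ContinuousLinearMap.mul ℝ 𝔸).flip

@[simp]
theorem adCLM_apply (a x : 𝔸) : adCLM 𝔸 a x = a * x - x * a := rfl

variable (𝔸) in
noncomputable def mulLeftRingHom : 𝔸 →+* (𝔸 →L[ℝ] 𝔸) :=
  { NonUnitalAlgHom.Lmul ℝ 𝔸 with map_one' := by ext; simp }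

variable (𝔸) in
noncomputable def mulRightRingHom : 𝔸ᵐᵒᵖ →+* (𝔸 →L[ℝ] 𝔸) where
  toFun a := (ContinuousLinearMap.mul ℝ 𝔸).flip a.unop
  map_one' := by ext; simp
  map_mul' a b := by ext; simp [mul_assoc]
  map_zero' := by ext; simp
  map_add' a b := by ext; simp

variable [CompleteSpace 𝔸]

theorem exp_adCLM_apply (a x : 𝔸) : exp (adCLM 𝔸 a) x = exp a * x * exp (-a) := by
  let : NormedAlgebra ℚ 𝔸 := .restrictScalars ℚ ℝ 𝔸
  let : NormedAlgebra ℚ (𝔸 →L[ℝ] 𝔸) := .restrictScalars ℚ ℝ _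
  have hsplit : adCLM 𝔸 a = mulLeftRingHom 𝔸 a + mulRightRingHom 𝔸 (.op (-a)) := by
    ext y; simp [mulLeftRingHom, mulRightRingHom, sub_eq_add_neg]
  have hcomm : Commute (mulLeftRingHom 𝔸 a) (mulRightRingHom 𝔸 (.op (-a))) := by
    ext y; simp [mulLeftRingHom, mulRightRingHom, mul_assoc]
  have hL : Continuous (mulLeftRingHom 𝔸) := (ContinuousLinearMap.mul ℝ 𝔸).continuous
  have hR : Continuous (mulRightRingHom 𝔸) :=
    (ContinuousLinearMap.mul ℝ 𝔸).flip.continuous.comp MulOpposite.continuous_unop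
  rw [hsplit, exp_add_of_commute hcomm, ← map_exp _ hL, ← map_exp _ hR, exp_op]
  simp [mulLeftRingHom, mulRightRingHom, mul_assoc]

theorem commute_exp_neg_mul_exp_iff (a b z : 𝔸) :
    Commute z (exp (-a) * exp b) ↔ exp (adCLM 𝔸 a) z = exp (adCLM 𝔸 b) z := by
  let : NormedAlgebra ℚ 𝔸 := .restrictScalars ℚ ℝ 𝔸
  let := invertibleExp a
  let := invertibleExp b
  simpa only [invOf_exp, exp_adCLM_apply] using commute_invOf_mul_iff (u := exp a) (v := exp b) z

theorem forall_commute_exp_neg_smul_mul_exp_smul_iff (a b z : 𝔸) :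
    (∀ s : ℝ, 0 ≤ s → Commute z (exp (-(s • a)) * exp (s • b))) ↔
      ∀ n, Commute ((fun x => x * a - a * x)^[n] z) (b - a) := by
  have hiter (n : ℕ) : (fun x => x * a - a * x)^[n] z = ((-adCLM 𝔸 a) ^ n) z := by
    rw [FunLike.coe_pow_eq_iterate]
    congr
    ext x
    simp
  have hcomm (y : 𝔸) : Commute y (b - a) ↔ adCLM 𝔸 (b - a) y = 0 := by
    rw [adCLM_apply, sub_eq_zero, eq_comm]
    rfl
  calc (∀ s : ℝ, 0 ≤ s → Commute z (exp (-(s • a)) * exp (s • b)))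
      ↔ ∀ s : ℝ, 0 ≤ s → exp (s • adCLM 𝔸 a) z = exp (s • adCLM 𝔸 b) z := by
        simp_rw [commute_exp_neg_mul_exp_iff, map_smul]
    _ ↔ ∀ n, adCLM 𝔸 (b - a) ((adCLM 𝔸 a ^ n) z) = 0 := by
        rw [exp_smul_apply_eq_iff, pow_apply_eq_pow_apply_iff, map_sub]
    _ ↔ ∀ n, Commute ((fun x => x * a - a * x)^[n] z) (b - a) := by
        refine forall_congr' fun n => ?_
        rw [hiter, hcomm, neg_pow_apply, map_zsmul, (isUnit_neg_one.pow n).smul_eq_zero]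

end BanachAlgebra

theorem itComm_eq_iterate {m : ℕ} (Z A : Matrix (Fin m) (Fin m) ℝ) (n : ℕ) :
    itComm Z A n = (fun X => X * A - A * X)^[n] Z := by
  induction n with
  | zero => rfl
  | succ n ih => rw [Function.iterate_succ_apply', ← ih]; rfl

/-- Let `A, V, Z, C ∈ M_m(ℝ)` with `C` invertible and set
`L(t) = exp(−A·t/2)·C·exp(V·t/2)` (so that `L(2t) = exp(−At)·C·exp(Vt)`).
Then `[Z, L(t)C⁻¹] = 0` for all `t ≥ 0` iff `{Z A^(n) (CVC⁻¹ − A)} = 0` for all `n ≥ 0`. -/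
theorem stmt_11 {m : ℕ} (A V Z C : Matrix (Fin m) (Fin m) ℝ) (hC : IsUnit C)
    (L : ℝ → Matrix (Fin m) (Fin m) ℝ)
    (hL : ∀ t : ℝ, L t = NormedSpace.exp ((-(t / 2)) • A) * C * NormedSpace.exp ((t / 2) • V)) :
    (∀ t : ℝ, 0 ≤ t → Z * (L t * C⁻¹) - (L t * C⁻¹) * Z = 0) ↔
      (∀ n : ℕ, itComm Z A n * (C * V * C⁻¹ - A) - (C * V * C⁻¹ - A) * itComm Z A n = 0) := by
  -- `exp` only depends on the topology, so any algebra norm on matrices will do.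
  let : NormedRing (Matrix (Fin m) (Fin m) ℝ) := Matrix.linftyOpNormedRing
  let : NormedAlgebra ℝ (Matrix (Fin m) (Fin m) ℝ) := Matrix.linftyOpNormedAlgebra
  have hLC (t : ℝ) : L t * C⁻¹ = exp (-((t / 2) • A)) * exp ((t / 2) • (C * V * C⁻¹)) := by
    rw [hL, neg_smul, mul_assoc, mul_assoc, ← mul_assoc C, ← Matrix.exp_conj _ _ hC,
      mul_smul_comm, smul_mul_assoc]
  calc (∀ t : ℝ, 0 ≤ t → Z * (L t * C⁻¹) - (L t * C⁻¹) * Z = 0)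
      ↔ ∀ s : ℝ, 0 ≤ s → Commute Z (exp (-(s • A)) * exp (s • (C * V * C⁻¹))) := by
        simp_rw [sub_eq_zero, hLC]
        refine ⟨fun h s hs => ?_, fun h t ht => h (t / 2) (by positivity)⟩
        have h2s := h (2 * s) (by positivity)
        rwa [mul_div_cancel_left₀ s two_ne_zero] at h2s
    _ ↔ _ := forall_commute_exp_neg_smul_mul_exp_smul_iff A _ Z
    _ ↔ _ := by simp_rw [itComm_eq_iterate, sub_eq_zero]; rfl
end

section
/- Let A, B, V, W ∈ M_m(ℝ) and let C ∈ M_m(ℝ) be invertible with C(4W − V²) = (4B − A²)C. Then the equalities {(4B − A²) A^(n)}·(CV − AC) = (CV − AC)·{(4W − V²) V^(n)} hold for all n = 0, 1, …, m² − 1 if and only if {(4B − A²) A^(n) (CVC⁻¹ − A)} = 0 for all n = 0, 1, …, m² − 1. -/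
/-!
Put `P = 4B − A²`, `Q = 4W − V²` and `X = CVC⁻¹`. Since `C` intertwines `Q` with `P` and `V` with
`X`, it intertwines `{Q V^(n)}` with `{P X^(n)}`, and as `CV − AC = (X − A)C` the first family of
equalities says `{P A^(n)}(X − A) = (X − A){P X^(n)}`. Writing `X = A + (X − A)`, one has
`{P X^(n)} = {P A^(n)}` as soon as all `{P A^(k)}` with `k < n` commute with `X − A`; so by induction
on `n` both families reduce to `{P A^(n)}` commuting with `X − A`.
-/

open Matrix

namespace itComm

variable {m : ℕ}

theorem semiconjBy {C Z Z' A A' : Matrix (Fin m) (Fin m) ℝ} (hZ : SemiconjBy C Z Z')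
    (hA : SemiconjBy C A A') (n : ℕ) : SemiconjBy C (itComm Z A n) (itComm Z' A' n) := by
  induction n with
  | zero => exact hZ
  | succ n ih => exact (ih.mul_right hA).sub_right (hA.mul_right ih)

theorem succ_eq_of_commute {Z A X : Matrix (Fin m) (Fin m) ℝ} {n : ℕ}
    (hn : itComm Z X n = itComm Z A n) (hcomm : Commute (itComm Z A n) (X - A)) :
    itComm Z X (n + 1) = itComm Z A (n + 1) := by
  have h := hcomm.eq
  simp only [mul_sub, sub_mul] at h
  simp only [itComm, hn]
  rwa [sub_eq_sub_iff_sub_eq_sub]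

theorem eq_of_forall_lt_commute {Z A X : Matrix (Fin m) (Fin m) ℝ} {n : ℕ}
    (h : ∀ k < n, Commute (itComm Z A k) (X - A)) : itComm Z X n = itComm Z A n := by
  induction n with
  | zero => rfl
  | succ n ih =>
    exact succ_eq_of_commute (ih fun k hk => h k (by omega)) (h n (by omega))

theorem forall_lt_intertwine_iff_forall_lt_commute {Z A X : Matrix (Fin m) (Fin m) ℝ} {N : ℕ} :
    (∀ n < N, itComm Z A n * (X - A) = (X - A) * itComm Z X n) ↔
      ∀ n < N, Commute (itComm Z A n) (X - A) := by
  constructor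
  · intro h n
    induction n using Nat.strong_induction_on with
    | _ n ih =>
      intro hn
      have hXA := eq_of_forall_lt_commute fun k hk => ih k hk (by omega)
      have hn' := h n hn
      rwa [hXA] at hn'
  · intro h n hn
    rw [eq_of_forall_lt_commute fun k hk => h k (by omega)]
    exact h n hn

end itComm

/-- Let `C` be invertible with `C(4W − V²) = (4B − A²)C`.  Then
`{(4B − A²) A^(n)}·(CV − AC) = (CV − AC)·{(4W − V²) V^(n)}` for `n = 0, …, m² − 1`
iff `{(4B − A²) A^(n) (CVC⁻¹ − A)} = 0` for `n = 0, …, m² − 1`. -/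
theorem stmt_13 {m : ℕ} (A B V W C : Matrix (Fin m) (Fin m) ℝ) (hC : IsUnit C)
    (hCW : C * ((4:ℝ) • W - V ^ 2) = ((4:ℝ) • B - A ^ 2) * C) :
    (∀ n < m ^ 2,
        itComm ((4:ℝ) • B - A ^ 2) A n * (C * V - A * C)
          = (C * V - A * C) * itComm ((4:ℝ) • W - V ^ 2) V n) ↔
      (∀ n < m ^ 2,
        itComm ((4:ℝ) • B - A ^ 2) A n * (C * V * C⁻¹ - A)
          - (C * V * C⁻¹ - A) * itComm ((4:ℝ) • B - A ^ 2) A n = 0) := by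
  set P := (4:ℝ) • B - A ^ 2
  set Q := (4:ℝ) • W - V ^ 2
  set X := C * V * C⁻¹
  have hX : SemiconjBy C V X :=
    (nonsing_inv_mul_cancel_right _ _ ((isUnit_iff_isUnit_det C).mp hC)).symm
  have hCV : C * V - A * C = (X - A) * C := by rw [sub_mul, ← hX.eq]
  have hconj := itComm.semiconjBy hCW hX
  have hcancel (n : ℕ) : itComm P A n * (C * V - A * C) = (C * V - A * C) * itComm Q V n ↔
      itComm P A n * (X - A) = (X - A) * itComm P X n := by
    rw [hCV, ← mul_assoc, mul_assoc _ C, (hconj n).eq, ← mul_assoc, hC.mul_left_inj]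
  simp only [hcancel, sub_eq_zero]
  exact itComm.forall_lt_intertwine_iff_forall_lt_commute
end

section
/- Let A, B, V ∈ M_m(ℝ) and let C ∈ M_m(ℝ) be invertible. Suppose that for some integer n ≥ 0 the matrix Z_n = {(4B − A²) A^(n)} has simple spectrum, i.e. its characteristic polynomial has m pairwise distinct (complex) roots. Then the conditions {(4B − A²) A^(k) (CVC⁻¹ − A)} = 0 for k = 0, 1, …, m² − 1 hold if and only if [B, CVC⁻¹ − A] = 0 and [A, CVC⁻¹] = 0. -/
/-!
The conditions say that `W = CVC⁻¹ - A` commutes with `{Z A^(k)}`, `Z = 4B - A²`, for `k < m²`.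
These iterated commutators are the orbit of `Z` under `ad A`, a linear map on the `m²`-dimensional
space of matrices, so by Cayley–Hamilton `W` then commutes with all of them. By the Jacobi
identity `[A, W]` commutes with `Z_n`, as `W` does. In an eigenbasis of `Z_n` (which has simple
spectrum over `ℂ`) both `W` and `[A, W]` are diagonal, and the diagonal of a commutator with a
diagonal matrix vanishes; hence `[A, W] = 0`, and then `[B, W] = 0` because `4B = Z + A²`.
The converse is immediate.
-/

open Matrix Polynomial

open Function Module

theorem Module.End.pow_apply_mem_of_forall_lt_finrank {R M : Type*} [CommRing R] [Nontrivial R]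
    [AddCommGroup M] [Module R M] [Module.Free R M] [Module.Finite R M]
    (f : End R M) {x : M} {S : Submodule R M} (h : ∀ k < finrank R M, (f ^ k) x ∈ S) (k : ℕ) :
    (f ^ k) x ∈ S := by
  have hdeg : (X ^ k %ₘ f.charpoly).degree < finrank R M := by
    calc _ < f.charpoly.degree := degree_modByMonic_lt _ f.charpoly_monic
      _ = _ := by rw [degree_eq_natDegree f.charpoly_monic.ne_zero, f.charpoly_natDegree]
  -- Cayley–Hamilton: `f ^ k` is a polynomial in `f` of degree below `finrank R M`.
  rw [← aeval_X_pow (R := R) f, ← aeval_modByMonic_eq_self_of_root f.aeval_self_charpoly,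
    aeval_eq_sum_range, LinearMap.sum_apply]
  refine S.sum_mem fun i _ => ?_
  by_cases hi : i < finrank R M
  · exact S.smul_mem _ (h i hi)
  · rw [coeff_eq_zero_of_degree_lt (hdeg.trans_le (by exact_mod_cast not_lt.mp hi)), zero_smul,
      LinearMap.zero_apply]
    exact S.zero_mem

theorem LinearMap.toMatrixAlgEquiv_eq_diagonal {R M ι : Type*} [CommRing R] [AddCommGroup M]
    [Module R M] [Fintype ι] [DecidableEq ι] {b : Basis ι R M} {f : End R M} {μ : ι → R}
    (h : ∀ i, f (b i) = μ i • b i) : toMatrixAlgEquiv b f = diagonal μ := by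
  ext i j
  rw [toMatrixAlgEquiv_apply, h, map_smul, b.repr_self, diagonal_apply, Finsupp.smul_apply,
    Finsupp.single_apply, smul_eq_mul, mul_ite, mul_one, mul_zero]
  obtain rfl | hij := eq_or_ne i j
  · simp only [if_true]
  · simp only [hij, hij.symm, if_false]

theorem Module.End.exists_basis_apply_eq_smul_of_card_roots_charpoly {K V : Type*} [Field K]
    [DecidableEq K] [AddCommGroup V] [Module K V] [FiniteDimensional K V] (f : End K V)
    (h : f.charpoly.roots.toFinset.card = finrank K V) :
    ∃ b : Basis f.charpoly.roots.toFinset K V, ∀ μ, f (b μ) = (μ : K) • b μ := by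
  have hμ (μ : f.charpoly.roots.toFinset) : f.HasEigenvalue μ := by
    rw [hasEigenvalue_iff_isRoot_charpoly]
    exact (mem_roots'.mp (Multiset.mem_toFinset.mp μ.2)).2
  choose v hv using fun μ => (hμ μ).exists_hasEigenvector
  have hli := f.eigenvectors_linearIndependent' _ Subtype.coe_injective v hv
  exact ⟨basisOfLinearIndependentOfCardEqFinrank' v hli (by simpa using h),
    fun μ => by simpa using (hv μ).apply_eq_smul⟩

section Diagonal

variable {n R : Type*} [Fintype n] [DecidableEq n] [CommRing R]

theorem Matrix.diagonal_mul_sub_mul_diagonal_apply (d : n → R) (X : Matrix n n R) (i j : n) :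
    (diagonal d * X - X * diagonal d) i j = (d i - d j) * X i j := by
  simp only [sub_apply, diagonal_mul, mul_diagonal]
  ring

theorem Matrix.isDiag_of_commute_diagonal [NoZeroDivisors R] {d : n → R} (hd : Injective d)
    {X : Matrix n n R} (h : Commute (diagonal d) X) : X.IsDiag := by
  intro i j hij
  have hij' : (diagonal d * X - X * diagonal d) i j = 0 := by rw [h.eq, sub_self, zero_apply]
  rw [diagonal_mul_sub_mul_diagonal_apply] at hij'
  exact (mul_eq_zero.mp hij').resolve_left (sub_ne_zero.mpr (hd.ne hij))

theorem Matrix.mul_sub_mul_eq_zero_of_commute_diagonal [NoZeroDivisors R] {d : n → R}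
    (hd : Injective d) {A W : Matrix n n R} (hW : Commute (diagonal d) W)
    (hAW : Commute (diagonal d) (A * W - W * A)) : A * W - W * A = 0 := by
  obtain ⟨w, rfl⟩ : ∃ w, W = diagonal w :=
    ⟨_, (isDiag_of_commute_diagonal hd hW).diagonal_diag.symm⟩
  ext i j
  obtain rfl | hij := eq_or_ne i j
  · rw [← neg_sub, neg_apply, diagonal_mul_sub_mul_diagonal_apply, sub_self, zero_mul, neg_zero,
      zero_apply]
  · exact isDiag_of_commute_diagonal hd hAW hij

end Diagonal

theorem Matrix.mul_sub_mul_eq_zero_of_card_roots_charpoly {n K : Type*} [Fintype n]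
    [DecidableEq n] [Field K] [DecidableEq K] {Z A W : Matrix n n K}
    (hZ : Z.charpoly.roots.toFinset.card = Fintype.card n)
    (hW : Commute Z W) (hAW : Commute Z (A * W - W * A)) : A * W - W * A = 0 := by
  obtain ⟨b, hb⟩ := Module.End.exists_basis_apply_eq_smul_of_card_roots_charpoly (toLin' Z)
    (by rwa [charpoly_toLin', finrank_fintype_fun_eq_card])
  set Φ := toLinAlgEquiv'.trans (LinearMap.toMatrixAlgEquiv b)
  have hΦ : Φ Z = diagonal Subtype.val := LinearMap.toMatrixAlgEquiv_eq_diagonal hb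
  apply Φ.injective
  rw [map_sub, map_mul, map_mul, map_zero]
  refine mul_sub_mul_eq_zero_of_commute_diagonal Subtype.coe_injective ?_ ?_
  · simpa only [hΦ] using hW.map Φ
  · simpa only [hΦ, map_sub, map_mul] using hAW.map Φ

theorem Matrix.mul_sub_mul_eq_zero_of_card_roots_charpoly_map {n K L : Type*} [Fintype n]
    [DecidableEq n] [Field K] [Field L] [DecidableEq L] [Algebra K L] {Z A W : Matrix n n K}
    (hZ : (Z.charpoly.map (algebraMap K L)).roots.toFinset.card = Fintype.card n)
    (hW : Commute Z W) (hAW : Commute Z (A * W - W * A)) : A * W - W * A = 0 := by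
  set φ := (algebraMap K L).mapMatrix (m := n)
  apply map_injective (algebraMap K L).injective
  change φ (A * W - W * A) = φ 0
  rw [map_zero, map_sub, map_mul, map_mul]
  refine mul_sub_mul_eq_zero_of_card_roots_charpoly ?_ (hW.map φ) ?_
  · rwa [RingHom.mapMatrix_apply, charpoly_map]
  · simpa only [map_sub, map_mul] using hAW.map φ

/-- A form of the Jacobi identity. -/
theorem Commute.mul_sub_mul_right {R : Type*} [Ring R] {X A W : R} (hX : Commute X W)
    (hXA : Commute (X * A - A * X) W) : Commute X (A * W - W * A) := by
  rw [commute_iff_eq, ← sub_eq_zero] at *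
  calc X * (A * W - W * A) - (A * W - W * A) * X
      = ((X * A - A * X) * W - W * (X * A - A * X))
          - ((X * W - W * X) * A - A * (X * W - W * X)) := by noncomm_ring
    _ = 0 := by rw [hX, hXA]; noncomm_ring

section itComm

variable {m : ℕ} {Z A W : Matrix (Fin m) (Fin m) ℝ}

theorem itComm_eq_pow_apply (Z A : Matrix (Fin m) (Fin m) ℝ) (k : ℕ) :
    itComm Z A k = ((LinearMap.mulRight ℝ A - LinearMap.mulLeft ℝ A) ^ k) Z := by
  induction k with
  | zero => rfl
  | succ k ih => rw [pow_succ', Module.End.mul_apply, ← ih]; rfl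

theorem Commute.itComm (hZ : Commute Z W) (hA : Commute A W) (k : ℕ) :
    Commute (itComm Z A k) W := by
  induction k with
  | zero => exact hZ
  | succ k ih => exact (ih.mul_left hA).sub_left (hA.mul_left ih)

theorem commute_itComm_of_forall_lt_sq (h : ∀ k < m ^ 2, Commute (itComm Z A k) W) (k : ℕ) :
    Commute (itComm Z A k) W := by
  have hmem (X : Matrix (Fin m) (Fin m) ℝ) :
      X ∈ (Subalgebra.centralizer ℝ {W}).toSubmodule ↔ Commute X W := by
    simp [Subalgebra.mem_centralizer_iff, commute_iff_eq, eq_comm]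
  rw [← hmem, itComm_eq_pow_apply]
  refine Module.End.pow_apply_mem_of_forall_lt_finrank _ (fun k hk => ?_) k
  rw [← itComm_eq_pow_apply, hmem]
  exact h k (by simpa [Module.finrank_matrix, sq] using hk)

theorem commute_of_card_roots_charpoly_itComm {n : ℕ}
    (hsimple : ((itComm Z A n).charpoly.map (algebraMap ℝ ℂ)).roots.toFinset.card = m)
    (hn : Commute (itComm Z A n) W) (hn' : Commute (itComm Z A (n + 1)) W) : Commute A W :=
  sub_eq_zero.mp <| mul_sub_mul_eq_zero_of_card_roots_charpoly_map (by simpa using hsimple) hn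
    (hn.mul_sub_mul_right hn')

end itComm

theorem stmt_14_general {m : ℕ} (A B V C : Matrix (Fin m) (Fin m) ℝ)
    (n : ℕ)
    (hsimple :
      ((itComm ((4:ℝ) • B - A ^ 2) A n).charpoly.map (algebraMap ℝ ℂ)).roots.toFinset.card = m) :
    (∀ k < m ^ 2,
        itComm ((4:ℝ) • B - A ^ 2) A k * (C * V * C⁻¹ - A)
          - (C * V * C⁻¹ - A) * itComm ((4:ℝ) • B - A ^ 2) A k = 0) ↔
      (B * (C * V * C⁻¹ - A) - (C * V * C⁻¹ - A) * B = 0 ∧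
        A * (C * V * C⁻¹) - (C * V * C⁻¹) * A = 0) := by
  simp only [sub_eq_zero, ← commute_iff_eq]
  set W := C * V * C⁻¹ - A
  set Z := (4:ℝ) • B - A ^ 2
  have hAW : Commute A (W + A) ↔ Commute A W :=
    ⟨fun h => by simpa using h.sub_right (Commute.refl A),
      fun h => h.add_right (Commute.refl A)⟩
  rw [← sub_add_cancel (C * V * C⁻¹) A, hAW]
  constructor
  · intro h
    have hall := commute_itComm_of_forall_lt_sq h
    have hA : Commute A W := commute_of_card_roots_charpoly_itComm hsimple (hall n) (hall (n + 1))
    have hZ : Commute Z W := hall 0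
    have hB : Commute ((4:ℝ) • B) W := by
      simpa only [Z, sub_add_cancel] using hZ.add_left (hA.pow_left 2)
    exact ⟨(Commute.smul_left_iff₀ four_ne_zero).mp hB, hA⟩
  · rintro ⟨hB, hA⟩ k -
    exact ((hB.smul_left 4).sub_left (hA.pow_left 2)).itComm hA k

/-- If for some `n ≥ 0` the matrix `Z_n = {(4B − A²) A^(n)}` has simple
spectrum (its characteristic polynomial has `m` pairwise distinct complex roots), then
`{(4B − A²) A^(k) (CVC⁻¹ − A)} = 0` for `k = 0, …, m² − 1` iff `[B, CVC⁻¹ − A] = 0` and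
`[A, CVC⁻¹] = 0`. -/
theorem stmt_14 {m : ℕ} (A B V C : Matrix (Fin m) (Fin m) ℝ) (hC : IsUnit C)
    (n : ℕ)
    (hsimple :
      ((itComm ((4:ℝ) • B - A ^ 2) A n).charpoly.map (algebraMap ℝ ℂ)).roots.toFinset.card = m) :
    (∀ k < m ^ 2,
        itComm ((4:ℝ) • B - A ^ 2) A k * (C * V * C⁻¹ - A)
          - (C * V * C⁻¹ - A) * itComm ((4:ℝ) • B - A ^ 2) A k = 0) ↔
      (B * (C * V * C⁻¹ - A) - (C * V * C⁻¹ - A) * B = 0 ∧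
        A * (C * V * C⁻¹) - (C * V * C⁻¹) * A = 0) :=
  stmt_14_general A B V C n hsimple
end
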